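/- arXiv:1411.4332 — 9 statements merged into one kernel-verified Lean document; each statement's English description precedes it below -/
import Mathlib

section
/- For any finite Kripke structure S, state q, and QCTL formula φ, the state q satisfies uniq(φ) := EF(φ) ∧ ∀z.(EF(φ ∧ z) → AG(φ → z)) under the structure semantics if and only if there is exactly one state reachable from q (including q itself) that satisfies φ. -/
/-- Structure semantics of `uniq(φ) := EF φ ∧ ∀z.(EF(φ ∧ z) → AG(φ → z))` at `q`:
it holds iff exactly one state reachable from `q` satisfies `φ`. -/
theorem uniq_iff {Q : Type} [Fintype Q] (R : Q → Q → Prop) (htotal : ∀ u, ∃ u', R u u')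
    (q : Q) (φ : Q → Prop) :
    ((∃ q', Relation.ReflTransGen R q q' ∧ φ q') ∧
      ∀ Z : Set Q,
        (∃ q', Relation.ReflTransGen R q q' ∧ φ q' ∧ q' ∈ Z) →
        ∀ q', Relation.ReflTransGen R q q' → φ q' → q' ∈ Z) ↔
    (∃! q', Relation.ReflTransGen R q q' ∧ φ q') := by
  constructor
  · rintro ⟨⟨q0, hq0, hφ0⟩, hZ⟩
    refine ⟨q0, ⟨hq0, hφ0⟩, ?_⟩
    rintro q1 ⟨hq1, hφ1⟩
    exact hZ {q0} ⟨q0, hq0, hφ0, rfl⟩ q1 hq1 hφ1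
  · rintro ⟨q0, ⟨hq0, hφ0⟩, huniq⟩
    refine ⟨⟨q0, hq0, hφ0⟩, ?_⟩
    rintro Z ⟨q1, hq1, hφ1, hZ1⟩ q' hq' hφ'
    have h1 : q1 = q0 := huniq q1 ⟨hq1, hφ1⟩
    have h2 : q' = q0 := huniq q' ⟨hq', hφ'⟩
    rw [h2, ← h1]; exact hZ1
end

section
/- For every finite Kripke structure S and every state q, the QCTL formula acyclic := AG(∃z.(z ∧ uniq(z) ∧ AX AG ¬z)) is false at q under the structure semantics; that is, no state of a finite Kripke structure (with total transition relation) satisfies acyclic under the structure semantics. -/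
/-- In a finite Kripke structure with total transition relation, the formula
`acyclic := AG(∃z.(z ∧ uniq(z) ∧ AX AG ¬z))` is false at every state, under the
structure semantics. Here `AG` at `q` quantifies over states reachable from `q`,
`∃z` over labellings `Z ⊆ Q`, and `uniq(z)` says exactly one reachable state is in `Z`. -/
theorem acyclic_false {Q : Type} [Fintype Q] (R : Q → Q → Prop)
    (htotal : ∀ u, ∃ u', R u u') (q : Q) :
    ¬ (∀ u, Relation.ReflTransGen R q u →
        ∃ Z : Set Q, u ∈ Z ∧
          ((∃ x, Relation.ReflTransGen R u x ∧ x ∈ Z) ∧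
           ∀ Z' : Set Q,
             (∃ x, Relation.ReflTransGen R u x ∧ x ∈ Z ∧ x ∈ Z') →
             ∀ x, Relation.ReflTransGen R u x → x ∈ Z → x ∈ Z') ∧
          (∀ x, R u x → ∀ y, Relation.ReflTransGen R x y → y ∉ Z)) := by
  intro h
  -- choose a successor function
  choose f hf using htotal
  -- every iterate of f from q is reachable
  have hreach : ∀ n, Relation.ReflTransGen R q (f^[n] q) := by
    intro n
    induction n with
    | zero => exact Relation.ReflTransGen.refl
    | succ n ih =>
        rw [Function.iterate_succ_apply']
        exact ih.tail (hf _)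
  have hstep : ∀ k, 0 < k → ∀ x : Q, Relation.TransGen R x (f^[k] x) := by
    intro k hk x
    induction k with
    | zero => omega
    | succ k ih =>
        rcases Nat.eq_zero_or_pos k with hk0 | hk0
        · subst hk0; simpa using Relation.TransGen.single (hf x)
        · rw [Function.iterate_succ_apply']
          exact (ih hk0).tail (hf _)
  -- pigeonhole: some repeat
  obtain ⟨m, n, hmn, heq⟩ := Finite.exists_ne_map_eq_of_infinite (fun n : ℕ => f^[n] q)
  wlog hlt : m < n generalizing m n
  · exact this n m hmn.symm heq.symm (by omega)
  set u := f^[m] q with hu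
  have hcycle : Relation.TransGen R u u := by
    have : f^[n] q = f^[(n - m) + m] q := by congr 1; omega
    rw [Function.iterate_add_apply] at this
    have h2 := hstep (n - m) (by omega) u
    rw [hu, ← this, ← heq] at h2
    exact h2
  obtain ⟨Z, huZ, _, hAX⟩ := h u (hreach m)
  obtain ⟨x, hux, hxu⟩ := (Relation.TransGen.head'_iff).mp hcycle
  exact hAX x hux u hxu huZ
end

section
/- Under the structure semantics, for any Kripke structure S, state q, and QCTL state formulas φ₁, φ₂ (in which z₁, z₂ do not occur), the formula E φ₁ U φ₂ is equivalent at q to ∃z₁.∃z₂.( E z₁ U z₂ ∧ AG((z₁ → φ₁) ∧ (z₂ → φ₂)) ). -/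
/-- `ρ` is an infinite path of `R` starting at `q`. -/
def IsPathFrom {Q : Type} (R : Q → Q → Prop) (q : Q) (ρ : ℕ → Q) : Prop :=
  ρ 0 = q ∧ ∀ i, R (ρ i) (ρ (i + 1))

/-- `φ U ψ` along path `ρ`. -/
def UntilP {Q : Type} (φ ψ : Q → Prop) (ρ : ℕ → Q) : Prop :=
  ∃ i, ψ (ρ i) ∧ ∀ j < i, φ (ρ j)

/-- Structure semantics: `E φ₁ U φ₂ ≡ ∃z₁.∃z₂.(E z₁ U z₂ ∧ AG((z₁ → φ₁) ∧ (z₂ → φ₂)))`,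
where `∃zᵢ` quantifies over labellings `Zᵢ ⊆ Q` with the fresh proposition `zᵢ`,
and `AG` quantifies over states reachable from `q`. -/
theorem EU_flatten {Q : Type} (R : Q → Q → Prop) (htotal : ∀ u, ∃ u', R u u')
    (q : Q) (φ₁ φ₂ : Q → Prop) :
    (∃ ρ, IsPathFrom R q ρ ∧ UntilP φ₁ φ₂ ρ) ↔
    ∃ Z₁ Z₂ : Set Q,
      (∃ ρ, IsPathFrom R q ρ ∧ UntilP (· ∈ Z₁) (· ∈ Z₂) ρ) ∧
      ∀ u, Relation.ReflTransGen R q u → (u ∈ Z₁ → φ₁ u) ∧ (u ∈ Z₂ → φ₂ u) := by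
  constructor
  · rintro ⟨ρ, hρ, hU⟩
    exact ⟨{u | φ₁ u}, {u | φ₂ u}, ⟨ρ, hρ, hU⟩, fun u _ => ⟨fun h => h, fun h => h⟩⟩
  · rintro ⟨Z₁, Z₂, ⟨ρ, hρ, i, hi, hj⟩, hAG⟩
    have reach : ∀ k, Relation.ReflTransGen R q (ρ k) := by
      intro k
      induction k with
      | zero => rw [hρ.1]
      | succ n ih => exact ih.tail (hρ.2 n)
    exact ⟨ρ, hρ, i, (hAG _ (reach i)).2 hi,
      fun j hji => (hAG _ (reach j)).1 (hj j hji)⟩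
end

section
/- Under the structure semantics, for any Kripke structure S, state q, and QCTL formula Q.φ where Q is a block of propositional quantifiers binding a proposition z' ∉ free(φ): EX(Q.φ) holds at q if and only if ∃z.Q.( uniq(z) ∧ EX(z ∧ φ) ) holds at q, where z is a fresh atomic proposition not occurring in Q.φ. -/
/-- A block of propositional quantifiers (each binding one fresh atomic proposition). -/
inductive QBlock where
  | nil : QBlock
  | ex : QBlock → QBlock
  | all : QBlock → QBlock

/-- Structure semantics of a quantifier block applied to a matrix `φ` whose truth value
depends on the labellings (sets of states) chosen for the quantified propositions. -/
def QBlock.sat {Q : Type} : QBlock → (List (Set Q) → Q → Prop) → Q → Prop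
  | .nil, φ, q => φ [] q
  | .ex b, φ, q => ∃ Z : Set Q, b.sat (fun L => φ (Z :: L)) q
  | .all b, φ, q => ∀ Z : Set Q, b.sat (fun L => φ (Z :: L)) q

/-- Semantics of `uniq(z)` at `q` for the `z`-labelling `Z`: exactly one reachable
state is labelled `z` (expressed as `EF z ∧ ∀z'.(EF(z ∧ z') → AG(z → z'))`). -/
def uniqSem {Q : Type} (R : Q → Q → Prop) (q : Q) (Z : Set Q) : Prop :=
  (∃ x, Relation.ReflTransGen R q x ∧ x ∈ Z) ∧
  ∀ Z' : Set Q, (∃ x, Relation.ReflTransGen R q x ∧ x ∈ Z ∧ x ∈ Z') →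
    ∀ x, Relation.ReflTransGen R q x → x ∈ Z → x ∈ Z'


lemma QBlock.sat_mono {Q : Type} (B : QBlock) :
    ∀ (φ ψ : List (Set Q) → Q → Prop) (a b : Q),
      (∀ L, φ L a → ψ L b) → B.sat φ a → B.sat ψ b := by
  induction B with
  | nil => intro φ ψ a b h hs; exact h [] hs
  | ex b ih =>
      rintro φ ψ a c h ⟨Z, hZ⟩
      exact ⟨Z, ih _ _ _ _ (fun L => h (Z :: L)) hZ⟩
  | all b ih =>
      intro φ ψ a c h hs Z
      exact ih _ _ _ _ (fun L => h (Z :: L)) (hs Z)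

lemma QBlock.sat_exists {Q : Type} (B : QBlock) :
    ∀ (φ : List (Set Q) → Q → Prop) (q : Q), B.sat φ q → ∃ L, φ L q := by
  induction B with
  | nil => intro φ q h; exact ⟨[], h⟩
  | ex b ih =>
      rintro φ q ⟨Z, hZ⟩
      obtain ⟨L, hL⟩ := ih _ _ hZ
      exact ⟨Z :: L, hL⟩
  | all b ih =>
      intro φ q h
      obtain ⟨L, hL⟩ := ih _ _ (h ∅)
      exact ⟨∅ :: L, hL⟩

/-- Structure semantics: `EX (Q.φ) ≡ ∃z.Q.(uniq(z) ∧ EX(z ∧ φ))` for a fresh `z`. -/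
theorem EX_prenex {Q : Type} (R : Q → Q → Prop) (htotal : ∀ u, ∃ u', R u u')
    (q : Q) (B : QBlock) (φ : List (Set Q) → Q → Prop) :
    (∃ q', R q q' ∧ B.sat φ q') ↔
    ∃ Z : Set Q,
      B.sat (fun L u => uniqSem R u Z ∧ ∃ q', R u q' ∧ q' ∈ Z ∧ φ L q') q := by
  constructor
  · rintro ⟨q', hR, hs⟩
    refine ⟨{q'}, ?_⟩
    refine B.sat_mono _ _ _ _ (fun L hφ => ?_) hs
    refine ⟨⟨⟨q', Relation.ReflTransGen.single hR, rfl⟩, ?_⟩, q', hR, rfl, hφ⟩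
    rintro Z' ⟨x, _, rfl, hx'⟩ y _ rfl
    exact hx'
  · rintro ⟨Z, hs⟩
    obtain ⟨L, ⟨⟨x0, hx0r, hx0Z⟩, huniq⟩, q0, hq0R, hq0Z, -⟩ := B.sat_exists _ _ hs
    refine ⟨q0, hq0R, ?_⟩
    refine B.sat_mono _ _ _ _ (fun L' h => ?_) hs
    obtain ⟨hu, q', hR', hZ', hφ'⟩ := h
    have : q' = q0 := by
      have := hu.2 {q0} ⟨q0, Relation.ReflTransGen.single hq0R, hq0Z, rfl⟩
      exact this q' (Relation.ReflTransGen.single hR') hZ'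
    exact this ▸ hφ'
end

section
/- Let S = (Q, R, ℓ) be a Kripke structure all of whose states are reachable from q, and suppose the labelling with h, v, l, r, t, b, s witnesses all the grid formulas (Formulas (5)–(12) of the paper), in particular: every state has one or two successors, two successors of the same state differ in both their h- and their v-labelling, and the s-state has only its self-loop. Then for any transition (u, u') ∈ R, either u = u' (and u is labelled s), or: u and u' agree on h if and only if they disagree on v. -/
variable {Q : Type}

/-- Reachability in the Kripke structure. -/
def Reach (R : Q → Q → Prop) : Q → Q → Prop := Relation.ReflTransGen R

/-- `ρ` is an infinite path of `R`. -/
def IsPath (R : Q → Q → Prop) (ρ : ℕ → Q) : Prop := ∀ i, R (ρ i) (ρ (i + 1))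

/-- Existential until `E φ U ψ` at `q`. -/
def EUsem (R : Q → Q → Prop) (φ ψ : Q → Prop) (q : Q) : Prop :=
  ∃ ρ : ℕ → Q, ρ 0 = q ∧ IsPath R ρ ∧ ∃ i, ψ (ρ i) ∧ ∀ j < i, φ (ρ j)

/-- Universal until `A φ U ψ` at `q`. -/
def AUsem (R : Q → Q → Prop) (φ ψ : Q → Prop) (q : Q) : Prop :=
  ∀ ρ : ℕ → Q, ρ 0 = q → IsPath R ρ → ∃ i, ψ (ρ i) ∧ ∀ j < i, φ (ρ j)

/-- `d` ranges over the four "directions" `{h, ¬h, v, ¬v}`. -/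
def IsDir (h v : Q → Prop) (d : Q → Prop) : Prop :=
  d = h ∨ d = (fun y => ¬ h y) ∨ d = v ∨ d = (fun y => ¬ v y)

/-- Semantic content of the grid-characterising formulas (Formulas (5)–(12) of the
paper), for a Kripke structure `(Q, R)` with initial state `q`, all of whose states
are reachable from `q`, labelled with `h, v, l, r, t, b, s`. -/
structure GridHyp (R : Q → Q → Prop) (q : Q) (h v l r t b s : Q → Prop) : Prop where
  /-- all states are reachable from `q` -/
  reach_all : ∀ u, Reach R q u
  /-- Formula (5), first conjunct: every state has a successor -/
  succ_ex : ∀ u, ∃ x, R u x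
  /-- Formula (5): for all labellings `A, B`, a state with two successors differing
  on `B` (inside `A`) has all successors in `A`, and its two successors are labelled
  `(h_s, ¬v_s)` and `(¬h_s, v_s)` relative to its own labelling `(h_s, v_s)` -/
  two_succ : ∀ (A B : Set Q) (u : Q),
    (∃ x, R u x ∧ x ∈ A ∧ x ∈ B) → (∃ x, R u x ∧ x ∈ A ∧ x ∉ B) →
    (∀ x, R u x → x ∈ A) ∧
    ∀ hs vs : Q → Prop,
      (hs = h ∨ hs = fun y => ¬ h y) → (vs = v ∨ vs = fun y => ¬ v y) →
      hs u → vs u →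
      (∃ x, R u x ∧ ¬ hs x ∧ vs x) ∧ (∃ x, R u x ∧ hs x ∧ ¬ vs x)
  /-- Formula (6): exactly one `s`-state -/
  s_uniq : ∃! u, s u
  /-- Formula (6): `AG (s → AG s)` — the `s`-state has only its self-loop -/
  s_forever : ∀ u, s u → ∀ u', Reach R u u' → s u'
  /-- Formula (6): `AF s` at `q` -/
  s_af : ∀ ρ : ℕ → Q, ρ 0 = q → IsPath R ρ → ∃ i, s (ρ i)
  /-- Formula (7): the initial state is labelled `h ∧ v` … -/
  init_h : h q
  init_v : v q
  /-- … and has successors labelled `(h, ¬v)` and `(¬h, v)` -/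
  init_succ₁ : ∃ x, R q x ∧ h x ∧ ¬ v x
  init_succ₂ : ∃ x, R q x ∧ ¬ h x ∧ v x
  /-- Formula (8): square completion, for each direction `d ∈ {h,¬h,v,¬v}` and
  every labelling `G` (the quantified proposition `γ`) -/
  square1 : ∀ d : Q → Prop, IsDir h v d → ∀ (G : Set Q) (u : Q),
    d u → (∃ x, R u x ∧ d x) → (∃ x, R u x ∧ ¬ d x) →
    ((∃ x, R u x ∧ d x ∧ ∀ y, R x y → y ∈ G) →
      ∃ x, R u x ∧ ¬ d x ∧ ∃ y, R x y ∧ ¬ d y ∧ y ∈ G) ∧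
    ((∃ x, R u x ∧ ¬ d x ∧ ∀ y, R x y → y ∈ G) →
      ∃ x, R u x ∧ d x ∧ ∃ y, R x y ∧ ¬ d y ∧ y ∈ G)
  /-- Formula (9): second square condition -/
  square2 : ∀ d : Q → Prop, IsDir h v d → ∀ (G : Set Q) (u : Q),
    d u →
    ((∃ x, R u x ∧ d x ∧ ∃ y, R x y ∧ ¬ d y ∧ y ∈ G) ↔
     (∃ x, R u x ∧ ¬ d x ∧ ¬ s x ∧ ∃ y, R x y ∧ ¬ d y ∧ y ∈ G))
  /-- Formula (10): every labelled state is reached from `q` by a horizontal-then-vertical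
  path and by a vertical-then-horizontal path -/
  hv : ∀ G : Set Q, (∃ u, Reach R q u ∧ u ∈ G) →
    ∃ hq vq hg vg : Q → Prop,
      (hq = h ∨ hq = fun y => ¬ h y) ∧ (vq = v ∨ vq = fun y => ¬ v y) ∧
      (hg = h ∨ hg = fun y => ¬ h y) ∧ (vg = v ∨ vg = fun y => ¬ v y) ∧
      EUsem R hq (fun x => hq x ∧ EUsem R vg (fun y => vg y ∧ y ∈ G) x) q ∧
      EUsem R vq (fun x => vq x ∧ EUsem R hg (fun y => hg y ∧ y ∈ G) x) q
  /-- Formula (11): from every state, the `s`-state is reached by such paths -/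
  HV : ∃ hs vs : Q → Prop,
    (hs = h ∨ hs = fun y => ¬ h y) ∧ (vs = v ∨ vs = fun y => ¬ v y) ∧
    ∀ u, Reach R q u →
      ∃ hq vq : Q → Prop,
        (hq = h ∨ hq = fun y => ¬ h y) ∧ (vq = v ∨ vq = fun y => ¬ v y) ∧
        EUsem R hq (fun x => hq x ∧ EUsem R vs (fun y => vs y ∧ s y) x) u ∧
        EUsem R vq (fun x => vq x ∧ EUsem R hs (fun y => hs y ∧ s y) x) u
  /-- Formula (12): the border labels `l, r, t, b` -/
  lrtb_l₁ : AUsem R (fun x => v x ∧ l x) (fun x => ¬ v x ∧ ¬ l x) q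
  lrtb_l₂ : ∀ u, ¬ v u → ∀ u', Reach R u u' → ¬ l u'
  lrtb_r : ∀ u, r u ↔ ((∀ u', Reach R u u' → v u') ∨ (∀ u', Reach R u u' → ¬ v u'))
  lrtb_t₁ : AUsem R (fun x => h x ∧ t x) (fun x => ¬ h x ∧ ¬ t x) q
  lrtb_t₂ : ∀ u, ¬ h u → ∀ u', Reach R u u' → ¬ t u'
  lrtb_b : ∀ u, b u ↔ ((∀ u', Reach R u u' → h u') ∨ (∀ u', Reach R u u' → ¬ h u'))

section Aux

private lemma same_eq (p : Q → Prop) (a : Q) :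
    (fun y => p a ↔ p y) = p ∨ (fun y => p a ↔ p y) = fun y => ¬ p y := by
  by_cases ha : p a
  · left; funext y; exact propext ⟨fun hh => hh.mp ha, fun hy => iff_of_true ha hy⟩
  · right; funext y; exact propext ⟨fun hh hy => ha (hh.mpr hy), fun hy => iff_of_false ha hy⟩

private lemma isDirH (h v : Q → Prop) (a : Q) : IsDir h v (fun y => h a ↔ h y) :=
  (same_eq h a).elim Or.inl (fun e => Or.inr (Or.inl e))

private lemma isDirV (h v : Q → Prop) (a : Q) : IsDir h v (fun y => v a ↔ v y) :=
  (same_eq v a).elim (fun e => Or.inr (Or.inr (Or.inl e))) (fun e => Or.inr (Or.inr (Or.inr e)))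

/-- Any successor of a state with (at least) two distinct successors flips exactly one
of `h`, `v`. -/
private lemma pin {R : Q → Q → Prop} {q : Q} {h v l r t b s : Q → Prop}
    (H : GridHyp R q h v l r t b s) {p x y : Q}
    (hx : R p x) (hy : R p y) (hxy : x ≠ y) :
    ∀ w, R p w → (¬ (h p ↔ h w) ∧ (v p ↔ v w)) ∨ ((h p ↔ h w) ∧ ¬ (v p ↔ v w)) := by
  have h1 := H.two_succ Set.univ {x} p ⟨x, hx, Set.mem_univ x, rfl⟩
      ⟨y, hy, Set.mem_univ y, fun hm => hxy (Set.mem_singleton_iff.mp hm).symm⟩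
  obtain ⟨⟨xa, rxa, hna, hva⟩, ⟨xb, rxb, hhb, hnb⟩⟩ :=
    h1.2 (fun z => h p ↔ h z) (fun z => v p ↔ v z)
      (same_eq h p) (same_eq v p) Iff.rfl Iff.rfl
  have hab : xa ≠ xb := fun e => hna (by rw [e]; exact hhb)
  have h2 := H.two_succ {xa, xb} {xa} p ⟨xa, rxa, Or.inl rfl, rfl⟩
      ⟨xb, rxb, Or.inr rfl, fun hm => hab (Set.mem_singleton_iff.mp hm).symm⟩
  intro w hw
  rcases h2.1 w hw with h' | h'
  · rw [h']; exact Or.inl ⟨hna, hva⟩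
  · rw [Set.mem_singleton_iff.mp h']; exact Or.inr ⟨hhb, hnb⟩

private lemma sstuff {R : Q → Q → Prop} {q : Q} {h v l r t b s : Q → Prop}
    (H : GridHyp R q h v l r t b s) :
    ∃ z, s z ∧ (∀ y, s y → y = z) ∧ ∀ y, R z y → y = z := by
  obtain ⟨z, hz, hu⟩ := H.s_uniq
  exact ⟨z, hz, hu, fun y hy => hu y (H.s_forever z hz y (Relation.ReflTransGen.single hy))⟩

private lemma path_reach {R : Q → Q → Prop} {ρ : ℕ → Q} (hp : IsPath R ρ) :
    ∀ i, Relation.ReflTransGen R (ρ 0) (ρ i)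
  | 0 => Relation.ReflTransGen.refl
  | (i+1) => (path_reach hp i).tail (hp i)

private lemma path_stay {R : Q → Q → Prop} {u z : Q} (hu : ∀ x, R u x → x = z)
    (hz : ∀ x, R z x → x = z) {ρ : ℕ → Q} (h0 : ρ 0 = u) (hp : IsPath R ρ) :
    ∀ i, ρ (i+1) = z
  | 0 => hu _ (h0 ▸ hp 0)
  | (i+1) => hz _ ((path_stay hu hz h0 hp i) ▸ hp (i+1))

private lemma reach_z {R : Q → Q → Prop} {q : Q} {h v l r t b s : Q → Prop}
    (H : GridHyp R q h v l r t b s) {z : Q} (hzu : ∀ y, s y → y = z) (u : Q) :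
    Relation.ReflTransGen R u z := by
  obtain ⟨hs, vs, _, _, hprop⟩ := H.HV
  obtain ⟨hq, vq, _, _, e1, _⟩ := hprop u (H.reach_all u)
  obtain ⟨ρ, h0, hp, i, ⟨_, inner⟩, _⟩ := e1
  obtain ⟨σ, s0, sp, k, ⟨_, hsk⟩, _⟩ := inner
  have r1 : Relation.ReflTransGen R u (ρ i) := h0 ▸ path_reach hp i
  have r2 : Relation.ReflTransGen R (ρ i) (σ k) := s0 ▸ path_reach sp k
  exact (hzu _ hsk) ▸ (r1.trans r2)

/-- The `HV` contradiction: a state `u ≠` the `s`-state `z` whose unique successor is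
`z`, flipping both `h` and `v`, is impossible. -/
private lemma lemBs {R : Q → Q → Prop} {q : Q} {h v l r t b s : Q → Prop}
    (H : GridHyp R q h v l r t b s) {z : Q} (hz : s z) (hzu : ∀ y, s y → y = z)
    (hzs : ∀ y, R z y → y = z) {u : Q} (hns : ¬ s u)
    (hall : ∀ x, R u x → x = z)
    (fH : ¬ (h u ↔ h z)) (fV : ¬ (v u ↔ v z)) : False := by
  obtain ⟨hs, vs, hhs, hvs, hprop⟩ := H.HV
  have hvsz : vs z := by
    obtain ⟨hq, vq, _, _, e1, _⟩ := hprop z (H.reach_all z)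
    obtain ⟨ρ, h0, hp, i, ⟨_, inner⟩, _⟩ := e1
    have hρ : ∀ j, ρ j = z := by
      intro j; cases j with
      | zero => exact h0
      | succ n => exact path_stay hzs hzs h0 hp n
    rw [hρ i] at inner
    obtain ⟨σ, s0, sp, k, ⟨hvk, _⟩, _⟩ := inner
    have hσ : ∀ j, σ j = z := by
      intro j; cases j with
      | zero => exact s0
      | succ n => exact path_stay hzs hzs s0 sp n
    rw [hσ k] at hvk; exact hvk
  have hhsz : hs z := by
    obtain ⟨hq, vq, _, _, _, e2⟩ := hprop z (H.reach_all z)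
    obtain ⟨ρ, h0, hp, i, ⟨_, inner⟩, _⟩ := e2
    have hρ : ∀ j, ρ j = z := by
      intro j; cases j with
      | zero => exact h0
      | succ n => exact path_stay hzs hzs h0 hp n
    rw [hρ i] at inner
    obtain ⟨σ, s0, sp, k, ⟨hhk, _⟩, _⟩ := inner
    have hσ : ∀ j, σ j = z := by
      intro j; cases j with
      | zero => exact s0
      | succ n => exact path_stay hzs hzs s0 sp n
    rw [hσ k] at hhk; exact hhk
  obtain ⟨hq, vq, hhq, _, e1, _⟩ := hprop u (H.reach_all u)
  obtain ⟨ρ, h0, hp, i, ⟨hqi, inner⟩, hpre⟩ := e1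
  cases i with
  | zero =>
    rw [h0] at inner
    obtain ⟨σ, s0, sp, k, ⟨_, hsk⟩, spre⟩ := inner
    cases k with
    | zero => exact hns (s0 ▸ hsk)
    | succ m =>
      have hvsu : vs u := s0 ▸ spre 0 (Nat.succ_pos m)
      rcases hvs with e | e
      · subst e; exact fV (iff_of_true hvsu hvsz)
      · subst e; exact fV (iff_of_false hvsu hvsz)
  | succ m =>
    have hρ : ρ (m+1) = z := path_stay hall hzs h0 hp m
    rw [hρ] at hqi
    have hqu : hq u := h0 ▸ hpre 0 (Nat.succ_pos m)
    rcases hhq with e | e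
    · subst e; exact fH (iff_of_true hqu hqi)
    · subst e; exact fH (iff_of_false hqu hqi)

/-- Lemma B: a non-`s` state whose unique successor flips both `h` and `v` is impossible. -/
private lemma lemB {R : Q → Q → Prop} {q : Q} {h v l r t b s : Q → Prop}
    (H : GridHyp R q h v l r t b s) :
    ∀ u u', ¬ s u → (∀ x, R u x → x = u') →
      ¬ (h u ↔ h u') → ¬ (v u ↔ v u') → False := by
  obtain ⟨z, hz, hzu, hzs⟩ := sstuff H
  intro u
  have hr' : Relation.ReflTransGen R u z := reach_z H hzu u
  induction hr' using Relation.ReflTransGen.head_induction_on with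
  | refl => exact fun u' hns _ _ _ => hns hz
  | @head a c hstep hrest ih =>
    intro u' hns hall fH fV
    have hcu' : c = u' := hall c hstep
    subst hcu'
    have hLfalse : ∀ G : Set Q,
        ¬ ∃ x, R a x ∧ (h a ↔ h x) ∧ ∃ y, R x y ∧ ¬ (h a ↔ h y) ∧ y ∈ G := by
      intro G
      rintro ⟨x, rax, hdx, -⟩
      exact fH ((hall x rax) ▸ hdx)
    have hRfalse : ∀ G : Set Q,
        ¬ ∃ x, R a x ∧ ¬ (h a ↔ h x) ∧ ¬ s x ∧ ∃ y, R x y ∧ ¬ (h a ↔ h y) ∧ y ∈ G := by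
      intro G hRG
      exact hLfalse G ((H.square2 _ (isDirH h v a) G a Iff.rfl).mpr hRG)
    have hLfalseV : ∀ G : Set Q,
        ¬ ∃ x, R a x ∧ (v a ↔ v x) ∧ ∃ y, R x y ∧ ¬ (v a ↔ v y) ∧ y ∈ G := by
      intro G
      rintro ⟨x, rax, hdx, -⟩
      exact fV ((hall x rax) ▸ hdx)
    have hRfalseV : ∀ G : Set Q,
        ¬ ∃ x, R a x ∧ ¬ (v a ↔ v x) ∧ ¬ s x ∧ ∃ y, R x y ∧ ¬ (v a ↔ v y) ∧ y ∈ G := by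
      intro G hRG
      exact hLfalseV G ((H.square2 _ (isDirV h v a) G a Iff.rfl).mpr hRG)
    by_cases hsc : s c
    · have hcz : c = z := hzu c hsc
      rw [hcz] at hall fH fV
      exact lemBs H hz hzu hzs hns hall fH fV
    · have hdy : ∀ y, R c y → (h a ↔ h y) := by
        intro y ry
        by_contra hn
        exact hRfalse {y} ⟨c, hstep, fH, hsc, y, ry, hn, rfl⟩
      have hdy' : ∀ y, R c y → (v a ↔ v y) := by
        intro y ry
        by_contra hn
        exact hRfalseV {y} ⟨c, hstep, fV, hsc, y, ry, hn, rfl⟩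
      obtain ⟨w, rw2⟩ := H.succ_ex c
      have fH' : ¬ (h c ↔ h w) := fun e => fH ((hdy w rw2).trans e.symm)
      have fV' : ¬ (v c ↔ v w) := fun e => fV ((hdy' w rw2).trans e.symm)
      have hallc : ∀ x, R c x → x = w := by
        intro x rx
        by_contra hne
        rcases pin H rx rw2 hne w rw2 with ⟨-, hvw⟩ | ⟨hhw, -⟩
        · exact fV' hvw
        · exact fH' hhw
      exact ih w hsc hallc fH' fV'

/-- Lemma A: a non-`s` state whose unique successor keeps both `h` and `v` is impossible. -/
private lemma lemA {R : Q → Q → Prop} {q : Q} {h v l r t b s : Q → Prop}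
    (H : GridHyp R q h v l r t b s) :
    ∀ u, Reach R q u → ∀ u', ¬ s u → (∀ x, R u x → x = u') →
      (h u ↔ h u') → (v u ↔ v u') → False := by
  obtain ⟨z, hz, hzu, hzs⟩ := sstuff H
  intro u hr
  have hr' : Relation.ReflTransGen R q u := hr
  clear hr
  induction hr' with
  | refl =>
    intro u' _ hall _ _
    obtain ⟨x, rx, hhx, _⟩ := H.init_succ₁
    obtain ⟨y, ry, hnhy, _⟩ := H.init_succ₂
    rw [hall x rx] at hhx
    rw [hall y ry] at hnhy
    exact hnhy hhx
  | @tail p u2 hqp hpu ih =>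
    intro u' hns hall hH hV
    have ru' : R u2 u' := by
      obtain ⟨w, hw⟩ := H.succ_ex u2
      exact (hall w hw) ▸ hw
    have hnsp : ¬ s p := fun hsp =>
      hns (H.s_forever p hsp u2 (Relation.ReflTransGen.single hpu))
    by_cases fH : h p ↔ h u2
    · by_cases fV : v p ↔ v u2
      · -- no flip at p → u2 : recurse via IH (or contradict pin)
        by_cases hex : ∃ x, R p x ∧ x ≠ u2
        · obtain ⟨x, rpx, hxne⟩ := hex
          rcases pin H hpu rpx (fun e => hxne e.symm) u2 hpu with ⟨hnh, -⟩ | ⟨-, hnv⟩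
          · exact hnh fH
          · exact hnv fV
        · have hallp : ∀ x, R p x → x = u2 := fun x rx =>
            by_contra fun hne => hex ⟨x, rx, hne⟩
          exact ih u2 hnsp hallp fH fV
      · -- p → u2 flips v only: square2 with the v-direction of p
        have hR : ∃ x, R p x ∧ ¬ (v p ↔ v x) ∧ ¬ s x ∧
            ∃ y, R x y ∧ ¬ (v p ↔ v y) ∧ y ∈ ({u'} : Set Q) :=
          ⟨u2, hpu, fV, hns, u', ru', fun e => fV (e.trans hV.symm), rfl⟩
        have hL := (H.square2 _ (isDirV h v p) {u'} p Iff.rfl).mpr hR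
        obtain ⟨x₂, rpx₂, hvx₂, y, rxy, -, hyu⟩ := hL
        have hyu' : y = u' := Set.mem_singleton_iff.mp hyu
        rw [hyu'] at rxy
        have hne : u2 ≠ x₂ := fun e => fV (by rw [e]; exact hvx₂)
        rcases pin H hpu rpx₂ hne x₂ rpx₂ with ⟨hnh2, -⟩ | ⟨-, hnv2⟩
        · have fH2 : ¬ (h x₂ ↔ h u') := fun e => hnh2 ((fH.trans hH).trans e.symm)
          have fV2 : ¬ (v x₂ ↔ v u') := fun e => fV ((hvx₂.trans e).trans hV.symm)
          have hnsx₂ : ¬ s x₂ := fun hs2 => fH2 (by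
            rw [hzu _ hs2, hzu _ (H.s_forever _ hs2 _ (Relation.ReflTransGen.single rxy))])
          have hallx₂ : ∀ w, R x₂ w → w = u' := by
            intro w rw2
            by_contra hne2
            rcases pin H rw2 rxy hne2 u' rxy with ⟨-, hv3⟩ | ⟨hh3, -⟩
            · exact fV2 hv3
            · exact fH2 hh3
          exact lemB H x₂ u' hnsx₂ hallx₂ fH2 fV2
        · exact hnv2 hvx₂
    · by_cases fV : v p ↔ v u2
      · -- p → u2 flips h only: square2 with the h-direction of p
        have hR : ∃ x, R p x ∧ ¬ (h p ↔ h x) ∧ ¬ s x ∧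
            ∃ y, R x y ∧ ¬ (h p ↔ h y) ∧ y ∈ ({u'} : Set Q) :=
          ⟨u2, hpu, fH, hns, u', ru', fun e => fH (e.trans hH.symm), rfl⟩
        have hL := (H.square2 _ (isDirH h v p) {u'} p Iff.rfl).mpr hR
        obtain ⟨x₂, rpx₂, hhx₂, y, rxy, -, hyu⟩ := hL
        have hyu' : y = u' := Set.mem_singleton_iff.mp hyu
        rw [hyu'] at rxy
        have hne : u2 ≠ x₂ := fun e => fH (by rw [e]; exact hhx₂)
        rcases pin H hpu rpx₂ hne x₂ rpx₂ with ⟨hnh2, -⟩ | ⟨-, hnv2⟩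
        · exact hnh2 hhx₂
        · have fH2 : ¬ (h x₂ ↔ h u') := fun e => fH ((hhx₂.trans e).trans hH.symm)
          have fV2 : ¬ (v x₂ ↔ v u') := fun e => hnv2 ((fV.trans hV).trans e.symm)
          have hnsx₂ : ¬ s x₂ := fun hs2 => fH2 (by
            rw [hzu _ hs2, hzu _ (H.s_forever _ hs2 _ (Relation.ReflTransGen.single rxy))])
          have hallx₂ : ∀ w, R x₂ w → w = u' := by
            intro w rw2
            by_contra hne2
            rcases pin H rw2 rxy hne2 u' rxy with ⟨-, hv3⟩ | ⟨hh3, -⟩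
            · exact fV2 hv3
            · exact fH2 hh3
          exact lemB H x₂ u' hnsx₂ hallx₂ fH2 fV2
      · -- p → u2 flips both
        by_cases hex : ∃ x, R p x ∧ x ≠ u2
        · obtain ⟨x, rpx, hxne⟩ := hex
          rcases pin H hpu rpx (fun e => hxne e.symm) u2 hpu with ⟨-, hv3⟩ | ⟨hh3, -⟩
          · exact fV hv3
          · exact fH hh3
        · have hallp : ∀ x, R p x → x = u2 := fun x rx =>
            by_contra fun hne => hex ⟨x, rx, hne⟩
          exact lemB H p u2 hnsp hallp fH fV

end Aux

/-- Lemma (lemma-alt): any transition `(u, u')` is either the self-loop at the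
`s`-state, or relates states that agree on `h` iff they disagree on `v`
(i.e. every successor is horizontal or vertical, and not both). -/
theorem grid_alt {R : Q → Q → Prop} {q : Q} {h v l r t b s : Q → Prop}
    (H : GridHyp R q h v l r t b s) :
    ∀ u u', R u u' → (u = u' ∧ s u) ∨ ((h u ↔ h u') ↔ ¬ (v u ↔ v u')) := by
  obtain ⟨z, hz, hzu, hzs⟩ := sstuff H
  intro u u' ruu'
  by_cases hsu : s u
  · left
    have hsu' : s u' := H.s_forever u hsu u' (Relation.ReflTransGen.single ruu')
    exact ⟨(hzu u hsu).trans (hzu u' hsu').symm, hsu⟩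
  · right
    by_cases hex : ∃ x, R u x ∧ x ≠ u'
    · obtain ⟨x, rx, hne⟩ := hex
      rcases pin H ruu' rx (fun e => hne e.symm) u' ruu' with ⟨hnh, hvv⟩ | ⟨hh, hnv⟩
      · exact iff_of_false hnh (not_not_intro hvv)
      · exact iff_of_true hh hnv
    · have hall : ∀ x, R u x → x = u' := fun x rx =>
        by_contra fun hne => hex ⟨x, rx, hne⟩
      by_cases fH : h u ↔ h u'
      · by_cases fV : v u ↔ v u'
        · exact (lemA H u (H.reach_all u) u' hsu hall fH fV).elim
        · exact iff_of_true fH fV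
      · by_cases fV : v u ↔ v u'
        · exact iff_of_false fH (not_not_intro fV)
        · exact (lemB H u u' hsu hall fH fV).elim
end

section
/- Under the hypotheses of the grid characterisation (Kripke structure S with all states reachable from q, labelling witnessing Formulas (5)–(12)): every state labelled l but not t has exactly one predecessor; q is the only state labelled both l and t; every state labelled r or labelled b has exactly one successor; and the only state labelled both r and b is the s-state (the state with the self-loop). -/
variable {Q : Type}

section Aux

variable {R : Q → Q → Prop} {q : Q} {h v l r t b s : Q → Prop}

private lemma dir_spec (P : Q → Prop) (x : Q) :
    ∃ d : Q → Prop, (d = P ∨ d = fun y => ¬ P y) ∧ (∀ y, d y ↔ (P y ↔ P x)) := by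
  by_cases hx : P x
  · exact ⟨P, Or.inl rfl, fun y => ⟨fun hy => iff_of_true hy hx, fun hy => hy.mpr hx⟩⟩
  · exact ⟨fun y => ¬ P y, Or.inr rfl,
      fun y => ⟨fun hy => iff_of_false hy hx, fun hy hPy => hx (hy.mp hPy)⟩⟩

private lemma isDir_h {d : Q → Prop} (hd : d = h ∨ d = fun y => ¬ h y) : IsDir h v d :=
  hd.elim Or.inl (fun e => Or.inr (Or.inl e))

private lemma isDir_v {d : Q → Prop} (hd : d = v ∨ d = fun y => ¬ v y) : IsDir h v d :=
  hd.elim (fun e => Or.inr (Or.inr (Or.inl e))) (fun e => Or.inr (Or.inr (Or.inr e)))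

/-- No two distinct successors share their `v`-label. -/
private lemma same_v_succ (H : GridHyp R q h v l r t b s) {u x y : Q}
    (hx : R u x) (hy : R u y) (hvxy : v x ↔ v y) : x = y := by
  by_contra hne
  have h2 := H.two_succ {z | v z ↔ v x} {x} u
    ⟨x, hx, Iff.rfl, rfl⟩
    ⟨y, hy, hvxy.symm, fun hm => hne (Set.mem_singleton_iff.mp hm).symm⟩
  obtain ⟨hs₀, hsd, hspec⟩ := dir_spec h u
  obtain ⟨vs₀, hvd, hvspec⟩ := dir_spec v u
  obtain ⟨⟨z₁, hz₁, _, hz₁v⟩, ⟨z₂, hz₂, _, hz₂v⟩⟩ :=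
    h2.2 hs₀ vs₀ hsd hvd ((hspec u).mpr Iff.rfl) ((hvspec u).mpr Iff.rfl)
  have e1 : v z₁ ↔ v x := h2.1 z₁ hz₁
  have e2 : v z₂ ↔ v x := h2.1 z₂ hz₂
  have e3 : v z₁ ↔ v u := (hvspec z₁).mp hz₁v
  have e4 : ¬ (v z₂ ↔ v u) := fun hc => hz₂v ((hvspec z₂).mpr hc)
  tauto

/-- No two distinct successors share their `h`-label. -/
private lemma same_h_succ (H : GridHyp R q h v l r t b s) {u x y : Q}
    (hx : R u x) (hy : R u y) (hvxy : h x ↔ h y) : x = y := by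
  by_contra hne
  have h2 := H.two_succ {z | h z ↔ h x} {x} u
    ⟨x, hx, Iff.rfl, rfl⟩
    ⟨y, hy, hvxy.symm, fun hm => hne (Set.mem_singleton_iff.mp hm).symm⟩
  obtain ⟨hs₀, hsd, hspec⟩ := dir_spec h u
  obtain ⟨vs₀, hvd, hvspec⟩ := dir_spec v u
  obtain ⟨⟨z₁, hz₁, hz₁h, _⟩, ⟨z₂, hz₂, hz₂h, _⟩⟩ :=
    h2.2 hs₀ vs₀ hsd hvd ((hspec u).mpr Iff.rfl) ((hvspec u).mpr Iff.rfl)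
  have e1 : h z₁ ↔ h x := h2.1 z₁ hz₁
  have e2 : h z₂ ↔ h x := h2.1 z₂ hz₂
  have e3 : ¬ (h z₁ ↔ h u) := fun hc => hz₁h ((hspec z₁).mpr hc)
  have e4 : h z₂ ↔ h u := (hspec z₂).mp hz₂h
  tauto

/-- A state cannot have a successor with its own labels plus another successor. -/
private lemma no_clone (H : GridHyp R q h v l r t b s) {p z' x : Q}
    (hz' : R p z') (hx : R p x) (hne : x ≠ z')
    (hv' : v z' ↔ v p) (hh' : h z' ↔ h p) : False := by
  have h2 := H.two_succ Set.univ {x} p ⟨x, hx, trivial, rfl⟩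
    ⟨z', hz', trivial, fun hm => hne (Set.mem_singleton_iff.mp hm).symm⟩
  obtain ⟨hs₀, hsd, hspec⟩ := dir_spec h p
  obtain ⟨vs₀, hvd, hvspec⟩ := dir_spec v p
  obtain ⟨⟨z₁, hz₁, hz₁h, hz₁v⟩, _⟩ :=
    h2.2 hs₀ vs₀ hsd hvd ((hspec p).mpr Iff.rfl) ((hvspec p).mpr Iff.rfl)
  have hz1e : z₁ = z' := same_v_succ H hz₁ hz' (((hvspec z₁).mp hz₁v).trans hv'.symm)
  apply hz₁h
  rw [hz1e]
  exact (hspec z').mpr hh'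

private lemma fin_path_reach {ρ : ℕ → Q} {n : ℕ}
    (hst : ∀ i < n, R (ρ i) (ρ (i+1))) :
    ∀ i j, i ≤ j → j ≤ n → Relation.ReflTransGen R (ρ i) (ρ j) := by
  intro i j
  induction j with
  | zero =>
      intro hij _
      have : i = 0 := by omega
      subst this; exact .refl
  | succ j ih =>
      intro hij hjn
      rcases Nat.eq_or_lt_of_le hij with he | hlt
      · rw [he]
      · exact (ih (by omega) (by omega)).tail (hst j (by omega))

private lemma reach_path {a c : Q} (hr : Relation.ReflTransGen R a c) :
    ∃ (n : ℕ) (ρ : ℕ → Q), ρ 0 = a ∧ ρ n = c ∧ ∀ i < n, R (ρ i) (ρ (i+1)) := by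
  induction hr with
  | refl => exact ⟨0, fun _ => a, rfl, rfl, fun i hi => absurd hi (Nat.not_lt_zero i)⟩
  | @tail b c hab hbc ih =>
      obtain ⟨n, ρ, h0, hn, hst⟩ := ih
      refine ⟨n+1, fun i => if i ≤ n then ρ i else c, by simp [h0], by simp, ?_⟩
      intro i hi
      by_cases hc : i + 1 ≤ n
      · simp only [if_pos (by omega : i ≤ n), if_pos hc]
        exact hst i (by omega)
      · have hin : i = n := by omega
        subst hin
        simp only [if_pos le_rfl, if_neg hc]
        rw [hn]; exact hbc

private lemma extend_path (H : GridHyp R q h v l r t b s) (ρ : ℕ → Q) (n : ℕ)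
    (hst : ∀ i < n, R (ρ i) (ρ (i+1))) :
    ∃ ρ' : ℕ → Q, IsPath R ρ' ∧ ∀ i ≤ n, ρ' i = ρ i := by
  classical
  have hf : ∀ x : Q, R x (Classical.choose (H.succ_ex x)) :=
    fun x => Classical.choose_spec (H.succ_ex x)
  refine ⟨fun i => if i ≤ n then ρ i else
      (fun x => Classical.choose (H.succ_ex x))^[i - n] (ρ n), ?_, ?_⟩
  · intro i
    by_cases h1 : i + 1 ≤ n
    · simp only [if_pos (by omega : i ≤ n), if_pos h1]
      exact hst i (by omega)
    · by_cases h2 : i ≤ n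
      · have hin : i = n := by omega
        subst hin
        simp only [if_pos le_rfl, if_neg h1]
        have e : i + 1 - i = 1 := by omega
        rw [e, Function.iterate_one]
        exact hf _
      · simp only [if_neg h2, if_neg h1]
        have e : i + 1 - n = (i - n) + 1 := by omega
        rw [e, Function.iterate_succ_apply']
        exact hf _
  · intro i hi; simp [if_pos hi]

private lemma reach_s_aux (H : GridHyp R q h v l r t b s) :
    ∀ z, Relation.ReflTransGen R q z →
      ∀ ρ : ℕ → Q, ρ 0 = z → IsPath R ρ →
        (∃ i, s (ρ i)) ∨ (∃ m, s m ∧ Relation.ReflTransGen R m z) := by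
  intro z hz
  induction hz with
  | refl => intro ρ h0 hP; exact Or.inl (H.s_af ρ h0 hP)
  | @tail y z hqy hyz ih =>
      intro ρ h0 hP
      have hP' : IsPath R (fun i => Nat.rec y (fun j _ => ρ j) i) := by
        intro i
        cases i with
        | zero =>
            show R y (ρ 0)
            rw [h0]; exact hyz
        | succ j =>
            show R (ρ j) (ρ (j+1))
            exact hP j
      rcases ih _ rfl hP' with ⟨i, hsi⟩ | ⟨m, hm, hmy⟩
      · cases i with
        | zero => exact Or.inr ⟨y, hsi, Relation.ReflTransGen.single hyz⟩
        | succ j => exact Or.inl ⟨j, hsi⟩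
      · exact Or.inr ⟨m, hm, hmy.tail hyz⟩

private lemma reach_to_s (H : GridHyp R q h v l r t b s) (z : Q) :
    ∃ w, s w ∧ Relation.ReflTransGen R z w := by
  obtain ⟨ρ, hP, hag⟩ := extend_path H (fun _ => z) 0 (fun i hi => absurd hi (Nat.not_lt_zero i))
  have h0 : ρ 0 = z := hag 0 le_rfl
  rcases reach_s_aux H z (H.reach_all z) ρ h0 hP with ⟨i, hsi⟩ | ⟨m, hm, hmz⟩
  · exact ⟨ρ i, hsi, h0 ▸ fin_path_reach (fun k _ => hP k) 0 i (Nat.zero_le _) le_rfl⟩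
  · exact ⟨z, H.s_forever m hm z hmz, .refl⟩

private lemma t_q (H : GridHyp R q h v l r t b s) : t q := by
  obtain ⟨ρ, hP, hag⟩ := extend_path H (fun _ => q) 0 (fun i hi => absurd hi (Nat.not_lt_zero i))
  obtain ⟨i, ⟨hnh, hnt⟩, hbef⟩ := H.lrtb_t₁ ρ (hag 0 le_rfl) hP
  cases i with
  | zero =>
      rw [hag 0 le_rfl] at hnh
      exact absurd H.init_h hnh
  | succ j =>
      have h0 := hbef 0 (by omega)
      rw [hag 0 le_rfl] at h0
      exact h0.2

private lemma l_path (H : GridHyp R q h v l r t b s) {u : Q} (hl : l u) {n : ℕ} {ρ : ℕ → Q}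
    (h0 : ρ 0 = q) (hn : ρ n = u) (hst : ∀ i < n, R (ρ i) (ρ (i+1))) :
    ∀ i ≤ n, v (ρ i) ∧ l (ρ i) := by
  obtain ⟨ρ', hP', hag⟩ := extend_path H ρ n hst
  obtain ⟨i₀, ⟨hnv, hnl⟩, hbef⟩ := H.lrtb_l₁ ρ' (by rw [hag 0 (Nat.zero_le _)]; exact h0) hP'
  by_cases hc : i₀ ≤ n
  · exfalso
    have hreach : Relation.ReflTransGen R (ρ i₀) u :=
      hn ▸ fin_path_reach hst i₀ n hc le_rfl
    refine H.lrtb_l₂ (ρ' i₀) hnv u ?_ hl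
    rw [hag i₀ hc]; exact hreach
  · intro i hi
    have hb := hbef i (by omega)
    rwa [hag i hi] at hb

private lemma t_path (H : GridHyp R q h v l r t b s) {u : Q} (ht : t u) {n : ℕ} {ρ : ℕ → Q}
    (h0 : ρ 0 = q) (hn : ρ n = u) (hst : ∀ i < n, R (ρ i) (ρ (i+1))) :
    ∀ i ≤ n, h (ρ i) ∧ t (ρ i) := by
  obtain ⟨ρ', hP', hag⟩ := extend_path H ρ n hst
  obtain ⟨i₀, ⟨hnh, hnt⟩, hbef⟩ := H.lrtb_t₁ ρ' (by rw [hag 0 (Nat.zero_le _)]; exact h0) hP'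
  by_cases hc : i₀ ≤ n
  · exfalso
    have hreach : Relation.ReflTransGen R (ρ i₀) u :=
      hn ▸ fin_path_reach hst i₀ n hc le_rfl
    refine H.lrtb_t₂ (ρ' i₀) hnh u ?_ ht
    rw [hag i₀ hc]; exact hreach
  · intro i hi
    have hb := hbef i (by omega)
    rwa [hag i hi] at hb

private lemma no_v_cycle (H : GridHyp R q h v l r t b s) {P : ℕ → Q} {a n : ℕ}
    (h0 : P 0 = q) (han : a < n) (hst : ∀ i < n, R (P i) (P (i+1)))
    (hvv : ∀ i ≤ n, v (P i)) (hPan : P a = P n) : False := by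
  set g : ℕ → ℕ := fun i => Nat.rec 0 (fun _ prev => if prev + 1 = n then a else prev + 1) i
    with hg
  have hglt : ∀ i, g i < n := by
    intro i
    induction i with
    | zero => show (0:ℕ) < n; omega
    | succ j ih =>
        show (if g j + 1 = n then a else g j + 1) < n
        split <;> omega
  have hPath : IsPath R (fun i => P (g i)) := by
    intro i
    show R (P (g i)) (P (if g i + 1 = n then a else g i + 1))
    split_ifs with he
    · rw [hPan, ← he]; exact hst (g i) (hglt i)
    · exact hst (g i) (hglt i)
  obtain ⟨i₀, ⟨hnv, _⟩, _⟩ := H.lrtb_l₁ (fun i => P (g i)) (show P (g 0) = q from h0) hPath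
  exact hnv (hvv (g i₀) (le_of_lt (hglt i₀)))

private lemma path_det (H : GridHyp R q h v l r t b s) {P₁ P₂ : ℕ → Q} {N₁ N₂ : ℕ}
    (h01 : P₁ 0 = q) (h02 : P₂ 0 = q)
    (hst1 : ∀ i < N₁, R (P₁ i) (P₁ (i+1))) (hst2 : ∀ i < N₂, R (P₂ i) (P₂ (i+1)))
    (hv1 : ∀ i ≤ N₁, v (P₁ i)) (hv2 : ∀ i ≤ N₂, v (P₂ i)) :
    ∀ i, i ≤ N₁ → i ≤ N₂ → P₁ i = P₂ i := by
  intro i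
  induction i with
  | zero => intro _ _; rw [h01, h02]
  | succ j ih =>
      intro h1 h2
      have he := ih (by omega) (by omega)
      have r1 : R (P₁ j) (P₁ (j+1)) := hst1 j (by omega)
      have r2 : R (P₁ j) (P₂ (j+1)) := by rw [he]; exact hst2 j (by omega)
      exact same_v_succ H r1 r2 (iff_of_true (hv1 (j+1) h1) (hv2 (j+1) h2))

private lemma pred_unique (H : GridHyp R q h v l r t b s) {u : Q} (hlu : l u) :
    ∀ w₁ w₂, R w₁ u → R w₂ u → w₁ = w₂ := by
  have build : ∀ w, R w u → ∃ (N : ℕ) (P : ℕ → Q), 0 < N ∧ P 0 = q ∧ P N = u ∧ P (N-1) = w ∧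
      (∀ i < N, R (P i) (P (i+1))) ∧ (∀ i ≤ N, v (P i)) := by
    intro w hw
    obtain ⟨m, τ, h0, hm, hst⟩ := reach_path (H.reach_all w)
    set P : ℕ → Q := fun i => if i ≤ m then τ i else u with hPdef
    have hP0 : P 0 = q := by simp [hPdef, h0]
    have hPN : P (m+1) = u := by simp [hPdef]
    have hPw : P m = w := by simp [hPdef, hm]
    have hPst : ∀ i < m+1, R (P i) (P (i+1)) := by
      intro i hi
      by_cases hc : i + 1 ≤ m
      · show R (if i ≤ m then τ i else u) (if i + 1 ≤ m then τ (i+1) else u)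
        simp only [if_pos (by omega : i ≤ m), if_pos hc]
        exact hst i (by omega)
      · have hin : i = m := by omega
        subst hin
        show R (if i ≤ i then τ i else u) (if i + 1 ≤ i then τ (i+1) else u)
        simp only [if_pos le_rfl, if_neg (by omega : ¬ i + 1 ≤ i)]
        rw [hm]; exact hw
    have hPv : ∀ i ≤ m+1, v (P i) := fun i hi => (l_path H hlu hP0 hPN hPst i hi).1
    refine ⟨m+1, P, by omega, hP0, hPN, ?_, hPst, hPv⟩
    simpa using hPw
  intro w₁ w₂ hw₁ hw₂
  obtain ⟨N₁, P₁, hN₁, h01, hN1u, hw1', hst1, hv1⟩ := build w₁ hw₁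
  obtain ⟨N₂, P₂, hN₂, h02, hN2u, hw2', hst2, hv2⟩ := build w₂ hw₂
  have det := path_det H h01 h02 hst1 hst2 hv1 hv2
  rcases lt_trichotomy N₁ N₂ with hlt | heq | hgt
  · exfalso
    have hPa : P₂ N₁ = P₂ N₂ := by
      rw [hN2u, ← hN1u]
      exact (det N₁ le_rfl (le_of_lt hlt)).symm
    exact no_v_cycle H h02 hlt hst2 hv2 hPa
  · subst heq
    rw [← hw1', ← hw2']
    exact det (N₁ - 1) (by omega) (by omega)
  · exfalso
    have hPa : P₁ N₂ = P₁ N₁ := by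
      rw [hN1u, ← hN2u]
      exact det N₂ (le_of_lt hgt) le_rfl
    exact no_v_cycle H h01 hgt hst1 hv1 hPa

/-- The key step lemma for the `r ∧ b → s` argument, generic in the two coordinates. -/
private lemma step_gen (H : GridHyp R q h v l r t b s) (α β : Q → Prop)
    (dirα : ∀ x : Q, ∃ d : Q → Prop, IsDir h v d ∧ ∀ y, d y ↔ (α y ↔ α x))
    (dirβ : ∀ x : Q, ∃ d : Q → Prop, IsDir h v d ∧ ∀ y, d y ↔ (β y ↔ β x))
    (sameα : ∀ u x y : Q, R u x → R u y → (α x ↔ α y) → x = y)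
    (clone : ∀ p z' x : Q, R p z' → R p x → x ≠ z' → (α z' ↔ α p) → (β z' ↔ β p) → False)
    {w₀ : Q} (hsw : s w₀) (hsu : ∀ x, s x → x = w₀)
    (habs : ∀ x, R w₀ x → x = w₀)
    {p z' : Q}
    (hGood : ∀ y, Relation.ReflTransGen R z' y → ((α y ↔ α w₀) ∧ (β y ↔ β w₀)))
    (hzw : z' ≠ w₀) (hpz : R p z') (hα : α p ↔ α w₀) :
    (∀ y, Relation.ReflTransGen R p y → ((α y ↔ α w₀) ∧ (β y ↔ β w₀))) ∧ p ≠ w₀ := by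
  by_cases hβ : β p ↔ β w₀
  · -- labels of p match those of w₀; p has the unique successor z'
    have huniq : ∀ x, R p x → x = z' := by
      intro x hx
      by_contra hne
      exact clone p z' x hpz hx hne ((hGood z' .refl).1.trans hα.symm)
        ((hGood z' .refl).2.trans hβ.symm)
    constructor
    · intro y hy
      rcases hy.cases_head with he | ⟨x, hpx, hxy⟩
      · rw [← he]; exact ⟨hα, hβ⟩
      · refine hGood y ?_
        rw [← huniq x hpx]; exact hxy
    · intro he
      exact hzw (habs z' (by rw [← he]; exact hpz))
  · -- the "A1" configuration; derive a contradiction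
    exfalso
    obtain ⟨c, hzc⟩ := H.succ_ex z'
    have hsucc : ∀ x, R z' x → x = c := fun x hx =>
      sameα z' x c hx hzc
        (((hGood x (.single hx)).1).trans ((hGood c (.single hzc)).1).symm)
    have hαc : α c ↔ α w₀ := (hGood c (.single hzc)).1
    have hβc : β c ↔ β w₀ := (hGood c (.single hzc)).2
    obtain ⟨d, hdDir, hdspec⟩ := dirβ p
    have hdp : d p := (hdspec p).mpr Iff.rfl
    have hndz : ¬ d z' := fun hd =>
      hβ (((hdspec z').mp hd).symm.trans ((hGood z' .refl).2))
    have hndc : ¬ d c := fun hd => hβ (((hdspec c).mp hd).symm.trans hβc)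
    obtain ⟨x₁, hpx₁, hdx₁, y, hx₁y, hndy, hyc⟩ :=
      (H.square2 d hdDir {c} p hdp).mpr
        ⟨z', hpz, hndz, fun hz => hzw (hsu z' hz), c, hzc, hndc, rfl⟩
    have hx₁c : R x₁ c := by rwa [Set.mem_singleton_iff.mp hyc] at hx₁y
    obtain ⟨e, heDir, hespec⟩ := dirα p
    have hep : e p := (hespec p).mpr Iff.rfl
    have hez : e z' := (hespec z').mpr ((hGood z' .refl).1.trans hα.symm)
    have hec : e c := (hespec c).mpr (hαc.trans hα.symm)
    have hew : e w₀ := (hespec w₀).mpr hα.symm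
    have hnex : ¬ e x₁ := by
      intro hex
      have hx₁z : x₁ = z' := sameα p x₁ z' hpx₁ hpz
        (((hespec x₁).mp hex).trans ((hespec z').mp hez).symm)
      rw [hx₁z] at hdx₁
      exact hndz hdx₁
    have hnsx : ¬ s x₁ := by
      intro hsx
      apply hnex
      rw [hsu x₁ hsx]
      exact hew
    -- all successors of x₁ satisfy e
    have hkey : ∀ y', R x₁ y' → e y' := by
      intro y' hy'
      by_contra hney
      obtain ⟨x, hpx, hex, y'', hxy'', hney'', -⟩ :=
        (H.square2 e heDir Set.univ p hep).mpr
          ⟨x₁, hpx₁, hnex, hnsx, y', hy', hney, trivial⟩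
      have hxz : x = z' := sameα p x z' hpx hpz
        (((hespec x).mp hex).trans ((hespec z').mp hez).symm)
      rw [hxz] at hxy''
      have hy''c : y'' = c := hsucc y'' hxy''
      rw [hy''c] at hney''
      exact hney'' hec
    have hsuccx : ∀ y', R x₁ y' → y' = c := fun y' hy' =>
      sameα x₁ y' c hy' hx₁c
        (((hespec y').mp (hkey y' hy')).trans ((hespec c).mp hec).symm)
    obtain ⟨x, hpx, hnex', y₂, hxy₂, hney₂, hy₂c⟩ :=
      (H.square1 e heDir {c} p hep ⟨z', hpz, hez⟩ ⟨x₁, hpx₁, hnex⟩).1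
        ⟨z', hpz, hez, fun y' hy' => Set.mem_singleton_iff.mpr (hsucc y' hy')⟩
    apply hney₂
    rw [Set.mem_singleton_iff.mp hy₂c]
    exact hec

/-- A state labelled `r` and `b` is the `s`-state. -/
private lemma rb_s (H : GridHyp R q h v l r t b s) {u : Q} (hr : r u) (hb : b u) : s u := by
  obtain ⟨w₀, hsw, hsu⟩ := H.s_uniq
  by_contra hns
  have habs : ∀ x, R w₀ x → x = w₀ := fun x hx =>
    hsu x (H.s_forever w₀ hsw x (Relation.ReflTransGen.single hx))
  obtain ⟨w, hsw', huw⟩ := reach_to_s H u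
  rw [hsu w hsw'] at huw
  have hvconst : ∀ y, Relation.ReflTransGen R u y → (v y ↔ v w₀) := by
    intro y hy
    rcases (H.lrtb_r u).mp hr with hall | hnone
    · exact iff_of_true (hall y hy) (hall w₀ huw)
    · exact iff_of_false (hnone y hy) (hnone w₀ huw)
  have hhconst : ∀ y, Relation.ReflTransGen R u y → (h y ↔ h w₀) := by
    intro y hy
    rcases (H.lrtb_b u).mp hb with hall | hnone
    · exact iff_of_true (hall y hy) (hall w₀ huw)
    · exact iff_of_false (hnone y hy) (hnone w₀ huw)
  have hGood_u : ∀ y, Relation.ReflTransGen R u y → ((v y ↔ v w₀) ∧ (h y ↔ h w₀)) :=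
    fun y hy => ⟨hvconst y hy, hhconst y hy⟩
  have hneq : u ≠ w₀ := fun e => hns (by rw [e]; exact hsw)
  have dirv : ∀ x : Q, ∃ d : Q → Prop, IsDir h v d ∧ ∀ y, d y ↔ (v y ↔ v x) := by
    intro x
    obtain ⟨d, hd, hspec⟩ := dir_spec v x
    exact ⟨d, isDir_v hd, hspec⟩
  have dirh : ∀ x : Q, ∃ d : Q → Prop, IsDir h v d ∧ ∀ y, d y ↔ (h y ↔ h x) := by
    intro x
    obtain ⟨d, hd, hspec⟩ := dir_spec h x
    exact ⟨d, isDir_h hd, hspec⟩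
  have samev : ∀ u' x y : Q, R u' x → R u' y → (v x ↔ v y) → x = y :=
    fun _ _ _ hx hy hh => same_v_succ H hx hy hh
  have sameh : ∀ u' x y : Q, R u' x → R u' y → (h x ↔ h y) → x = y :=
    fun _ _ _ hx hy hh => same_h_succ H hx hy hh
  have clonevh : ∀ p z' x : Q, R p z' → R p x → x ≠ z' → (v z' ↔ v p) → (h z' ↔ h p) → False :=
    fun _ _ _ a b' c d e => no_clone H a b' c d e
  have clonehv : ∀ p z' x : Q, R p z' → R p x → x ≠ z' → (h z' ↔ h p) → (v z' ↔ v p) → False :=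
    fun _ _ _ a b' c d e => no_clone H a b' c e d
  obtain ⟨hq', vq', hg', vg', hhqd, hvqd, hhgd, hvgd, hEU1, -⟩ :=
    H.hv {u} ⟨u, H.reach_all u, rfl⟩
  obtain ⟨ρ, hρ0, hρP, i, ⟨hhqi, σ, hσ0, hσP, k, ⟨hvgk, hσku⟩, hvgj⟩, hhqj⟩ := hEU1
  have hσku' : σ k = u := Set.mem_singleton_iff.mp hσku
  have hvu : v u ↔ v w₀ := hvconst u .refl
  have ind1 : ∀ m, m ≤ k →
      (∀ y, Relation.ReflTransGen R (σ (k - m)) y → ((v y ↔ v w₀) ∧ (h y ↔ h w₀)))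
        ∧ σ (k - m) ≠ w₀ := by
    intro m
    induction m with
    | zero =>
        intro _
        rw [Nat.sub_zero, hσku']
        exact ⟨hGood_u, hneq⟩
    | succ m ih =>
        intro hm
        obtain ⟨hG, hNE⟩ := ih (by omega)
        have hidx : k - (m+1) + 1 = k - m := by omega
        have hstep : R (σ (k - (m+1))) (σ (k - m)) := by
          have hh := hσP (k - (m+1))
          rwa [hidx] at hh
        have hvgp : vg' (σ (k - (m+1))) := hvgj _ (by omega)
        have hvgku : vg' u := by rw [← hσku']; exact hvgk
        have hvp : v (σ (k - (m+1))) ↔ v w₀ := by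
          rcases hvgd with he | he
          · subst he
            exact iff_of_true hvgp (hvu.mp hvgku)
          · subst he
            exact iff_of_false hvgp (fun hw => hvgku (hvu.mpr hw))
        exact step_gen H v h dirv dirh samev clonevh hsw hsu habs hG hNE hstep hvp
  have hind1 := ind1 k le_rfl
  rw [Nat.sub_self, hσ0] at hind1
  obtain ⟨hGρi, hNEρi⟩ := hind1
  have hρlab : ∀ j' ≤ i, h (ρ j') ↔ h w₀ := by
    intro j' hj'
    rcases Nat.eq_zero_or_pos i with hi0 | hip
    · have hj0 : j' = 0 := by omega
      subst hj0
      have := (hGρi (ρ i) .refl).2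
      rwa [hi0] at this
    · have hq0 : hq' q := by rw [← hρ0]; exact hhqj 0 hip
      have hqh : hq' = h := by
        rcases hhqd with he | he
        · exact he
        · exfalso
          rw [he] at hq0
          exact hq0 H.init_h
      have hhw : h w₀ := by
        have hhi : h (ρ i) := by rw [← hqh]; exact hhqi
        exact ((hGρi (ρ i) .refl).2).mp hhi
      have hhj : h (ρ j') := by
        rcases Nat.lt_or_ge j' i with hlt | hge
        · rw [← hqh]; exact hhqj j' hlt
        · have hji : j' = i := by omega
          subst hji
          rw [← hqh]; exact hhqi
      exact iff_of_true hhj hhw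
  have ind2 : ∀ m, m ≤ i →
      (∀ y, Relation.ReflTransGen R (ρ (i - m)) y → ((v y ↔ v w₀) ∧ (h y ↔ h w₀)))
        ∧ ρ (i - m) ≠ w₀ := by
    intro m
    induction m with
    | zero =>
        intro _
        rw [Nat.sub_zero]
        exact ⟨hGρi, hNEρi⟩
    | succ m ih =>
        intro hm
        obtain ⟨hG, hNE⟩ := ih (by omega)
        have hidx : i - (m+1) + 1 = i - m := by omega
        have hstep : R (ρ (i - (m+1))) (ρ (i - m)) := by
          have hh := hρP (i - (m+1))
          rwa [hidx] at hh
        have hhp : h (ρ (i - (m+1))) ↔ h w₀ := hρlab _ (by omega)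
        have hG' : ∀ y, Relation.ReflTransGen R (ρ (i - m)) y → ((h y ↔ h w₀) ∧ (v y ↔ v w₀)) :=
          fun y hy => ⟨(hG y hy).2, (hG y hy).1⟩
        have hres := step_gen H h v dirh dirv sameh clonehv hsw hsu habs hG' hNE hstep hhp
        exact ⟨fun y hy => ⟨(hres.1 y hy).2, (hres.1 y hy).1⟩, hres.2⟩
  have hind2 := (ind2 i le_rfl).1
  rw [Nat.sub_self, hρ0] at hind2
  obtain ⟨x, hqx, hhx, hnvx⟩ := H.init_succ₁
  have hvw : v w₀ := (hind2 q .refl).1.mp H.init_v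
  exact hnvx ((hind2 x (.single hqx)).1.mpr hvw)

end Aux

/-- Lemma (lemma-predlrtb): every state labelled `l` but not `t` has exactly one
predecessor; the initial state `q` is the only state labelled both `l` and `t`;
every state labelled `r` or labelled `b` has exactly one successor; and the only
state labelled both `r` and `b` is the `s`-state. -/

theorem grid_predlrtb {R : Q → Q → Prop} {q : Q} {h v l r t b s : Q → Prop}
    (H : GridHyp R q h v l r t b s) :
    (∀ u, l u → ¬ t u → ∃! w, R w u) ∧
    (∀ u, l u → t u → u = q) ∧
    (∀ u, r u ∨ b u → ∃! w, R u w) ∧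
    (∀ u, r u → b u → s u) := by
  refine ⟨?_, ?_, ?_, ?_⟩
  · -- every state labelled `l` but not `t` has exactly one predecessor
    intro u hlu hntu
    have hneq : u ≠ q := fun e => hntu (by rw [e]; exact t_q H)
    obtain ⟨n, τ, h0, hn, hst⟩ := reach_path (H.reach_all u)
    have hn0 : 0 < n := by
      rcases Nat.eq_zero_or_pos n with hz | hp
      · exact absurd (by rw [← hn, hz, h0] : u = q) hneq
      · exact hp
    have hpred : R (τ (n-1)) u := by
      have hh := hst (n-1) (by omega)
      rwa [(by omega : n - 1 + 1 = n), hn] at hh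
    exact ⟨τ (n-1), hpred, fun y hy => pred_unique H hlu y (τ (n-1)) hy hpred⟩
  · -- `q` is the only state labelled both `l` and `t`
    intro u hlu htu
    by_contra hne
    obtain ⟨n, ρ, h0, hn, hst⟩ := reach_path (H.reach_all u)
    have hn0 : 0 < n := by
      rcases Nat.eq_zero_or_pos n with hz | hp
      · exact absurd (by rw [← hn, hz, h0] : u = q) hne
      · exact hp
    have hvl := l_path H hlu h0 hn hst
    have hht := t_path H htu h0 hn hst
    have h01 : R q (ρ 1) := by
      have hh := hst 0 hn0
      rwa [h0] at hh
    obtain ⟨x, hqx, hhx, hnvx⟩ := H.init_succ₁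
    have hxne : x ≠ ρ 1 := fun e => hnvx (by rw [e]; exact (hvl 1 hn0).1)
    exact no_clone H h01 hqx hxne
      (iff_of_true (hvl 1 hn0).1 H.init_v)
      (iff_of_true (hht 1 hn0).1 H.init_h)
  · -- every state labelled `r` or `b` has exactly one successor
    intro u hu
    obtain ⟨x, hx⟩ := H.succ_ex u
    refine ⟨x, hx, ?_⟩
    intro y hy
    rcases hu with hru | hbu
    · rcases (H.lrtb_r u).mp hru with hall | hnone
      · exact same_v_succ H hy hx
          (iff_of_true (hall y (.single hy)) (hall x (.single hx)))
      · exact same_v_succ H hy hx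
          (iff_of_false (hnone y (.single hy)) (hnone x (.single hx)))
    · rcases (H.lrtb_b u).mp hbu with hall | hnone
      · exact same_h_succ H hy hx
          (iff_of_true (hall y (.single hy)) (hall x (.single hx)))
      · exact same_h_succ H hy hx
          (iff_of_false (hnone y (.single hy)) (hnone x (.single hx)))
  · -- the only state labelled both `r` and `b` is the `s`-state
    intro u hru hbu
    exact rb_s H hru hbu
end

section
/- Under the hypotheses of the grid characterisation, the binary relation ⊑_L on the set L of l-labelled states, defined by u ⊑_L u' iff there is a vertical path (a path along which the truth value of v is constant) from u to u', is a total order on L with the initial state q as minimum element; symmetrically, the relation ⊑_T on the set T of t-labelled states defined via horizontal paths is a total order on T with minimum q. -/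
variable {Q : Type}

/-- A finite path from `u` to `u'` along which the truth value of the proposition `p`
is constant (equal to its value at `u`). -/
def ConstPath (R : Q → Q → Prop) (p : Q → Prop) (u u' : Q) : Prop :=
  ∃ (ρ : ℕ → Q) (n : ℕ), ρ 0 = u ∧ ρ n = u' ∧ (∀ i < n, R (ρ i) (ρ (i + 1))) ∧
    ∀ i ≤ n, (p (ρ i) ↔ p u)
section Helpers

variable {R : Q → Q → Prop}

lemma reach_of_fin {ρ : ℕ → Q} {n : ℕ}
    (hp : ∀ i < n, R (ρ i) (ρ (i + 1))) :
    ∀ {a b : ℕ}, a ≤ b → b ≤ n → Reach R (ρ a) (ρ b) := by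
  intro a b hab hbn
  induction b with
  | zero =>
    have : a = 0 := by omega
    subst this; exact Relation.ReflTransGen.refl
  | succ b ih =>
    rcases Nat.lt_or_ge a (b + 1) with hlt | hge
    · exact Relation.ReflTransGen.tail (ih (by omega) (by omega)) (hp b (by omega))
    · have : a = b + 1 := by omega
      subst this; exact Relation.ReflTransGen.refl

lemma fin_of_reach {x y : Q} (hr : Reach R x y) :
    ∃ (ρ : ℕ → Q) (n : ℕ), ρ 0 = x ∧ ρ n = y ∧ ∀ i < n, R (ρ i) (ρ (i + 1)) := by
  induction hr with
  | refl => exact ⟨fun _ => x, 0, rfl, rfl, by omega⟩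
  | @tail b c hab hbc ih =>
    obtain ⟨ρ, n, h0, hn, hp⟩ := ih
    refine ⟨fun i => if i ≤ n then ρ i else c, n + 1, by simp [h0],
      by beta_reduce; rw [if_neg (by omega)], ?_⟩
    intro i hi
    beta_reduce
    by_cases h1 : i < n
    · simp only [if_pos (by omega : i ≤ n), if_pos (by omega : i + 1 ≤ n)]
      exact hp i h1
    · rw [if_pos (by omega : i ≤ n), if_neg (by omega : ¬ i + 1 ≤ n),
        show i = n from by omega, hn]
      exact hbc

lemma reach_of_isPath {ρ : ℕ → Q} (hp : IsPath R ρ) {i j : ℕ} (hij : i ≤ j) :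
    Reach R (ρ i) (ρ j) :=
  reach_of_fin (n := j) (fun i _ => hp i) hij le_rfl

/-- build an infinite path from a finite prefix followed by a loop -/
lemma loop_path {τ : ℕ → Q} {m : ℕ} {c : ℕ → Q} {k : ℕ}
    (hk : 1 ≤ k) (hτc : τ m = c 0) (hck : c k = c 0)
    (eτ : ∀ i < m, R (τ i) (τ (i + 1))) (ec : ∀ i < k, R (c i) (c (i + 1))) :
    ∃ σ : ℕ → Q, σ 0 = τ 0 ∧ IsPath R σ ∧ ∀ a, 1 ≤ a → σ (m + a * k) = c 0 := by
  refine ⟨fun i => if i ≤ m then τ i else c ((i - m - 1) % k + 1), by simp, ?_, ?_⟩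
  · intro i
    beta_reduce
    rcases Nat.lt_or_ge i m with hlt | hge
    · simp only [if_pos (by omega : i ≤ m), if_pos (by omega : i + 1 ≤ m)]
      exact eτ i hlt
    rcases Nat.eq_or_lt_of_le hge with heq | hgt
    · rw [if_pos (by omega : i ≤ m), if_neg (by omega : ¬ i + 1 ≤ m),
        show i + 1 - m - 1 = 0 from by omega, Nat.zero_mod,
        show i = m from by omega, hτc]
      exact ec 0 hk
    · set j := i - m - 1 with hj
      have e1 : (if i ≤ m then τ i else c ((i - m - 1) % k + 1)) = c (j % k + 1) := by
        rw [if_neg (by omega)]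
      have e2 : (if i + 1 ≤ m then τ (i + 1) else c ((i + 1 - m - 1) % k + 1))
          = c ((j + 1) % k + 1) := by
        have hjj : i + 1 - m - 1 = j + 1 := by omega
        rw [if_neg (by omega), hjj]
      rw [e1, e2]
      have hdm := Nat.div_add_mod j k
      by_cases hjk : j % k + 1 = k
      · have hmul : (j + 1) % k = 0 := by
          have : j + 1 = k * (j / k + 1) := by
            rw [Nat.mul_add, Nat.mul_one]; omega
          rw [this, Nat.mul_mod_right]
        rw [hjk, hck, hmul]
        exact ec 0 hk
      · have hlt' : j % k + 1 < k := by
          have := Nat.mod_lt j (show 0 < k by omega)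
          omega
        have hmul : (j + 1) % k = j % k + 1 := by
          have h1 : j + 1 = (j % k + 1) + k * (j / k) := by omega
          rw [h1, Nat.add_mul_mod_self_left, Nat.mod_eq_of_lt hlt']
        rw [hmul]
        exact ec (j % k + 1) hlt'
  · intro a ha
    beta_reduce
    obtain ⟨a', rfl⟩ : ∃ a', a = a' + 1 := ⟨a - 1, by omega⟩
    have h1 : m + (a' + 1) * k - m - 1 = (k - 1) + a' * k := by
      rw [Nat.add_mul, Nat.one_mul]; omega
    rw [if_neg (by nlinarith : ¬ m + (a' + 1) * k ≤ m), h1,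
      Nat.add_mul_mod_self_right, Nat.mod_eq_of_lt (by omega : k - 1 < k)]
    have : k - 1 + 1 = k := by omega
    rw [this, hck]

end Helpers
section Main

variable {R : Q → Q → Prop} {q : Q} {h v l r t b s : Q → Prop}

lemma vert_det (H : GridHyp R q h v l r t b s) :
    ∀ w x y, v w → R w x → R w y → v x → v y → x = y := by
  intro w x y hvw hRx hRy hvx hvy
  by_contra hne
  obtain ⟨hall, hex⟩ := H.two_succ {x, y} {x} w
    ⟨x, hRx, Or.inl rfl, rfl⟩
    ⟨y, hRy, Or.inr rfl, fun hm => hne (Set.mem_singleton_iff.mp hm).symm⟩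
  by_cases hw : h w
  · obtain ⟨-, z, hz, -, hznv⟩ := hex h v (Or.inl rfl) (Or.inl rfl) hw hvw
    rcases hall z hz with rfl | hz2
    · exact hznv hvx
    · exact hznv (Set.mem_singleton_iff.mp hz2 ▸ hvy)
  · obtain ⟨-, z, hz, -, hznv⟩ := hex (fun y => ¬ h y) v (Or.inr rfl) (Or.inl rfl) hw hvw
    rcases hall z hz with rfl | hz2
    · exact hznv hvx
    · exact hznv (Set.mem_singleton_iff.mp hz2 ▸ hvy)

lemma horiz_det (H : GridHyp R q h v l r t b s) :
    ∀ w x y, h w → R w x → R w y → h x → h y → x = y := by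
  intro w x y hhw hRx hRy hhx hhy
  by_contra hne
  obtain ⟨hall, hex⟩ := H.two_succ {x, y} {x} w
    ⟨x, hRx, Or.inl rfl, rfl⟩
    ⟨y, hRy, Or.inr rfl, fun hm => hne (Set.mem_singleton_iff.mp hm).symm⟩
  by_cases hw : v w
  · obtain ⟨⟨z, hz, hznh, -⟩, -⟩ := hex h v (Or.inl rfl) (Or.inl rfl) hhw hw
    rcases hall z hz with rfl | hz2
    · exact hznh hhx
    · exact hznh (Set.mem_singleton_iff.mp hz2 ▸ hhy)
  · obtain ⟨⟨z, hz, hznh, -⟩, -⟩ := hex h (fun y => ¬ v y) (Or.inl rfl) (Or.inr rfl) hhw hw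
    rcases hall z hz with rfl | hz2
    · exact hznh hhx
    · exact hznh (Set.mem_singleton_iff.mp hz2 ▸ hhy)

/-- the master lemma: all five order properties, for an abstract direction `p`
and border label `lab`. -/
lemma master (H : GridHyp R q h v l r t b s) (p lab : Q → Prop)
    (det : ∀ w x y, p w → R w x → R w y → p x → p y → x = y)
    (au : AUsem R (fun x => p x ∧ lab x) (fun x => ¬ p x ∧ ¬ lab x) q)
    (mono : ∀ u, ¬ p u → ∀ u', Reach R u u' → ¬ lab u')
    (hpq : p q) :
    (∀ u, lab u → ConstPath R p u u) ∧
    (∀ u u', lab u → lab u' → ConstPath R p u u' → ConstPath R p u' u → u = u') ∧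
    (∀ u u' u'', lab u → lab u' → lab u'' →
        ConstPath R p u u' → ConstPath R p u' u'' → ConstPath R p u u'') ∧
    (∀ u u', lab u → lab u' → ConstPath R p u u' ∨ ConstPath R p u' u) ∧
    (lab q ∧ ∀ u, lab u → ConstPath R p q u) := by
  classical
  obtain ⟨f, hf⟩ : ∃ f : Q → Q, ∀ x, R x (f x) :=
    ⟨fun x => Classical.choose (H.succ_ex x), fun x => Classical.choose_spec (H.succ_ex x)⟩
  -- minimality: a finite all-`p` path from `q` to every `lab`-state
  have hmin : ∀ u, lab u → ∃ (ρ : ℕ → Q) (n : ℕ), ρ 0 = q ∧ ρ n = u ∧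
      (∀ i < n, R (ρ i) (ρ (i + 1))) ∧ ∀ i ≤ n, p (ρ i) := by
    intro u hu
    obtain ⟨ρ, m, h0, hm, hp⟩ := fin_of_reach (H.reach_all u)
    set σ : ℕ → Q := fun i => if i ≤ m then ρ i else f^[i - m] (ρ m) with hσ
    have hσeq : ∀ j ≤ m, σ j = ρ j := fun j hj => if_pos hj
    have hσ0 : σ 0 = q := by rw [hσeq 0 (by omega), h0]
    have hσpath : IsPath R σ := by
      intro i
      rcases Nat.lt_or_ge i m with hlt | hge
      · rw [hσeq i (by omega), hσeq (i + 1) (by omega)]; exact hp i hlt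
      · have e1 : σ i = f^[i - m] (ρ m) := by
          rcases Nat.eq_or_lt_of_le hge with heq | hgt
          · rw [hσeq i (by omega), show i - m = 0 from by omega,
              Function.iterate_zero_apply, show i = m from by omega]
          · exact if_neg (by omega)
        have e2 : σ (i + 1) = f (f^[i - m] (ρ m)) := by
          show (if i + 1 ≤ m then ρ (i + 1) else f^[i + 1 - m] (ρ m)) = _
          rw [if_neg (by omega), show i + 1 - m = (i - m) + 1 from by omega,
            Function.iterate_succ_apply']
        rw [e1, e2]; exact hf _
    obtain ⟨i, ⟨hnp, hnl⟩, hall⟩ := au σ hσ0 hσpath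
    have him : m < i := by
      by_contra hle
      push_neg at hle
      have hσi : σ i = ρ i := hσeq i hle
      have : Reach R (σ i) u := by
        rw [hσi, ← hm]; exact reach_of_fin hp hle le_rfl
      exact mono (σ i) hnp u this hu
    refine ⟨ρ, m, h0, hm, hp, fun j hj => ?_⟩
    have := (hall j (by omega)).1
    rwa [hσeq j hj] at this
  -- lab q
  have hlabq : lab q := by
    obtain ⟨i, ⟨hnp, hnl⟩, hall⟩ := au (fun i => f^[i] q) rfl
      (fun i => by show R (f^[i] q) (f^[i + 1] q)
                   rw [Function.iterate_succ_apply']; exact hf _)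
    rcases Nat.eq_zero_or_pos i with rfl | hi
    · exact absurd hpq hnp
    · exact (hall 0 hi).2
  -- the minimum property as ConstPath
  have hminC : ∀ u, lab u → ConstPath R p q u := by
    intro u hu
    obtain ⟨ρ, n, h0, hn, hp, hpall⟩ := hmin u hu
    exact ⟨ρ, n, h0, hn, hp, fun i hi => iff_of_true (hpall i hi) hpq⟩
  refine ⟨?_, ?_, ?_, ?_, hlabq, hminC⟩
  · -- reflexivity
    intro u _
    exact ⟨fun _ => u, 0, rfl, rfl, by omega, fun i hi => Iff.rfl⟩
  · -- antisymmetry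
    intro u u' _ _ h1 h2
    obtain ⟨ρ₁, n₁, a0, a1, e1, -⟩ := h1
    obtain ⟨ρ₂, n₂, b0, b1, e2, -⟩ := h2
    rcases Nat.eq_zero_or_pos n₁ with rfl | hn₁
    · rw [← a0, a1]
    rcases Nat.eq_zero_or_pos n₂ with rfl | hn₂
    · rw [← b0, b1]
    -- build the cycle from `u` to `u`
    set c : ℕ → Q := fun i => if i ≤ n₁ then ρ₁ i else ρ₂ (i - n₁) with hc
    have hc0 : c 0 = u := by rw [show c 0 = ρ₁ 0 from if_pos (by omega), a0]
    have hck : c (n₁ + n₂) = c 0 := by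
      rw [hc0, show c (n₁ + n₂) = ρ₂ (n₁ + n₂ - n₁) from if_neg (by omega),
        show n₁ + n₂ - n₁ = n₂ from by omega, b1]
    have ecyc : ∀ i < n₁ + n₂, R (c i) (c (i + 1)) := by
      intro i hi
      rcases Nat.lt_or_ge i n₁ with hlt | hge
      · rw [show c i = ρ₁ i from if_pos (by omega),
          show c (i + 1) = ρ₁ (i + 1) from if_pos (by omega)]
        exact e1 i hlt
      rcases Nat.eq_or_lt_of_le hge with heq | hgt
      · rw [show c i = ρ₁ i from if_pos (by omega),
          show c (i + 1) = ρ₂ (i + 1 - n₁) from if_neg (by omega),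
          show i = n₁ from by omega, a1, ← b0,
          show n₁ + 1 - n₁ = 1 from by omega]
        exact e2 0 hn₂
      · rw [show c i = ρ₂ (i - n₁) from if_neg (by omega),
          show c (i + 1) = ρ₂ (i + 1 - n₁) from if_neg (by omega),
          show i + 1 - n₁ = (i - n₁) + 1 from by omega]
        exact e2 (i - n₁) (by omega)
    -- prefix from q to u
    obtain ⟨τ, m, t0, tm, tp⟩ := fin_of_reach (H.reach_all u)
    obtain ⟨σ, s0, spath, shit⟩ := loop_path (by omega : 1 ≤ n₁ + n₂)
      (by rw [tm, hc0]) hck tp ecyc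
    obtain ⟨i, hsi⟩ := H.s_af σ (by rw [s0, t0]) spath
    have hsu : s u := by
      have hhit := shit (i + 1) (by omega)
      have : Reach R (σ i) (σ (m + (i + 1) * (n₁ + n₂))) :=
        reach_of_isPath spath (by nlinarith)
      have := H.s_forever _ hsi _ this
      rwa [hhit, hc0] at this
    have hsu' : s u' := by
      refine H.s_forever u hsu u' ?_
      rw [← a0, ← a1]; exact reach_of_fin e1 (by omega) le_rfl
    obtain ⟨w, -, hwq⟩ := H.s_uniq
    rw [hwq u hsu, hwq u' hsu']
  · -- transitivity
    intro u u' u'' _ _ _ h1 h2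
    obtain ⟨ρ₁, n₁, a0, a1, e1, p1⟩ := h1
    obtain ⟨ρ₂, n₂, b0, b1, e2, p2⟩ := h2
    refine ⟨fun i => if i ≤ n₁ then ρ₁ i else ρ₂ (i - n₁), n₁ + n₂, ?_, ?_, ?_, ?_⟩
    · beta_reduce; rw [if_pos (by omega), a0]
    · beta_reduce
      rcases Nat.eq_zero_or_pos n₂ with rfl | hn₂
      · rw [if_pos (by omega), show n₁ + 0 = n₁ from by omega, a1, ← b0, ← b1]
      · rw [if_neg (by omega), show n₁ + n₂ - n₁ = n₂ from by omega, b1]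
    · intro i hi
      beta_reduce
      rcases Nat.lt_or_ge i n₁ with hlt | hge
      · rw [if_pos (by omega : i ≤ n₁), if_pos (by omega : i + 1 ≤ n₁)]
        exact e1 i hlt
      rcases Nat.eq_or_lt_of_le hge with heq | hgt
      · rw [if_pos (by omega : i ≤ n₁), if_neg (by omega : ¬ i + 1 ≤ n₁),
          show i = n₁ from by omega, a1, ← b0,
          show n₁ + 1 - n₁ = 1 from by omega]
        exact e2 0 (by omega)
      · rw [if_neg (by omega : ¬ i ≤ n₁), if_neg (by omega : ¬ i + 1 ≤ n₁),
          show i + 1 - n₁ = (i - n₁) + 1 from by omega]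
        exact e2 (i - n₁) (by omega)
    · intro i hi
      beta_reduce
      by_cases hin : i ≤ n₁
      · rw [if_pos hin]; exact p1 i hin
      · rw [if_neg hin]
        have h2' := p2 (i - n₁) (by omega)
        have h3 : p u' ↔ p u := by rw [← a1]; exact p1 n₁ le_rfl
        exact h2'.trans h3
  · -- totality
    intro u u' hu hu'
    obtain ⟨ρ, n, a0, a1, e1, p1⟩ := hmin u hu
    obtain ⟨σ, m, b0, b1, e2, p2⟩ := hmin u' hu'
    have key : ∀ i, i ≤ n → i ≤ m → ρ i = σ i := by
      intro i
      induction i with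
      | zero => intro _ _; rw [a0, b0]
      | succ i ih =>
        intro h1 h2
        have he := ih (by omega) (by omega)
        refine det (ρ i) _ _ (p1 i (by omega)) (e1 i (by omega)) ?_
          (p1 (i + 1) (by omega)) (p2 (i + 1) (by omega))
        rw [he]; exact e2 i (by omega)
    rcases le_total n m with hnm | hmn
    · left
      refine ⟨fun j => σ (n + j), m - n, ?_, ?_, ?_, ?_⟩
      · show σ (n + 0) = u
        rw [Nat.add_zero, ← key n le_rfl hnm, a1]
      · show σ (n + (m - n)) = u'
        rw [show n + (m - n) = m from by omega, b1]
      · intro j hj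
        exact e2 (n + j) (by omega)
      · intro j hj
        exact iff_of_true (p2 (n + j) (by omega)) (by rw [← a1]; exact p1 n le_rfl)
    · right
      refine ⟨fun j => ρ (m + j), n - m, ?_, ?_, ?_, ?_⟩
      · show ρ (m + 0) = u'
        rw [Nat.add_zero, key m hmn le_rfl, b1]
      · show ρ (m + (n - m)) = u
        rw [show m + (n - m) = n from by omega, a1]
      · intro j hj
        exact e1 (m + j) (by omega)
      · intro j hj
        exact iff_of_true (p1 (m + j) (by omega)) (by rw [← b1]; exact p2 m le_rfl)

end Main

/-- Lemma (lemma-orderlt) and its consequences: the relation `u ⊑_L u'` ("there is a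
vertical path from `u` to `u'`") is a total order on the set `L` of `l`-labelled
states, with the initial state `q` as minimum; symmetrically, `⊑_T` (via horizontal
paths) is a total order on the set `T` of `t`-labelled states with minimum `q`. -/
theorem grid_orderlt {R : Q → Q → Prop} {q : Q} {h v l r t b s : Q → Prop}
    (H : GridHyp R q h v l r t b s) :
    ((∀ u, l u → ConstPath R v u u) ∧
     (∀ u u', l u → l u' → ConstPath R v u u' → ConstPath R v u' u → u = u') ∧
     (∀ u u' u'', l u → l u' → l u'' →
        ConstPath R v u u' → ConstPath R v u' u'' → ConstPath R v u u'') ∧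
     (∀ u u', l u → l u' → ConstPath R v u u' ∨ ConstPath R v u' u) ∧
     (l q ∧ ∀ u, l u → ConstPath R v q u)) ∧
    ((∀ u, t u → ConstPath R h u u) ∧
     (∀ u u', t u → t u' → ConstPath R h u u' → ConstPath R h u' u → u = u') ∧
     (∀ u u' u'', t u → t u' → t u'' →
        ConstPath R h u u' → ConstPath R h u' u'' → ConstPath R h u u'') ∧
     (∀ u u', t u → t u' → ConstPath R h u u' ∨ ConstPath R h u' u) ∧
     (t q ∧ ∀ u, t u → ConstPath R h q u)) := by
  exact ⟨master H v l (vert_det H) H.lrtb_l₁ H.lrtb_l₂ H.init_v,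
    master H h t (horiz_det H) H.lrtb_t₁ H.lrtb_t₂ H.init_h⟩
end

section
/- A Kripke structure S = (Q, R, ℓ) with all states reachable from q satisfies, under the structure semantics at q, the formula ∃r.∀γ. AG(EX ⊤ ∧ (EX γ → AX γ)) ∧ (EF(r ∧ γ) → AG(r → γ)) ∧ EF AG r if and only if the reachable part of S is a finite line: it is isomorphic to L_m = ([1, m], {(i, i+1) | 1 ≤ i ≤ m−1} ∪ {(m, m)}) for some m ≥ 1, with q corresponding to 1. -/
/-- Characterisation of finite lines: a Kripke structure all of whose states are
reachable from `q` satisfies, at `q` under the structure semantics, the formula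
`∃r.∀γ. AG(EX ⊤ ∧ (EX γ → AX γ)) ∧ (EF(r ∧ γ) → AG(r → γ)) ∧ EF AG r`
iff it is isomorphic to the line `L_m = ([1,m], {(i,i+1) | 1 ≤ i ≤ m−1} ∪ {(m,m)})`
for some `m ≥ 1`, with `q` corresponding to `1`. Propositional quantification is
represented by quantification over the sets `Rl` (for `r`) and `G` (for `γ`)
of labelled states. -/
theorem line_charac {Q : Type} (R : Q → Q → Prop) (htotal : ∀ u, ∃ u', R u u')
    (q : Q) (hreach : ∀ u, Relation.ReflTransGen R q u) :
    (∃ Rl : Set Q, ∀ G : Set Q,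
      (∀ u, Relation.ReflTransGen R q u →
        (∃ x, R u x) ∧ ((∃ x, R u x ∧ x ∈ G) → ∀ x, R u x → x ∈ G)) ∧
      ((∃ u, Relation.ReflTransGen R q u ∧ u ∈ Rl ∧ u ∈ G) →
        ∀ u, Relation.ReflTransGen R q u → u ∈ Rl → u ∈ G) ∧
      (∃ u, Relation.ReflTransGen R q u ∧ ∀ u', Relation.ReflTransGen R u u' → u' ∈ Rl)) ↔
    (∃ (m : ℕ) (hm : 0 < m) (e : Q ≃ Fin m),
      e q = ⟨0, hm⟩ ∧
      ∀ a b : Q, R a b ↔ ((e a).1 + 1 = (e b).1 ∨ ((e a).1 = m - 1 ∧ b = a))) := by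
  constructor
  · rintro ⟨Rl, h⟩
    -- determinism
    have hdet : ∀ u x y, R u x → R u y → x = y := by
      intro u x y hx hy
      have := ((h {x}).1 u (hreach u)).2 ⟨x, hx, rfl⟩ y hy
      exact this.symm
    obtain ⟨f, hf⟩ : ∃ f : Q → Q, ∀ u, R u (f u) :=
      ⟨fun u => (htotal u).choose, fun u => (htotal u).choose_spec⟩
    have hRf : ∀ u v, R u v ↔ v = f u := fun u v =>
      ⟨fun h' => hdet u v (f u) h' (hf u), fun h' => h' ▸ hf u⟩
    have hRl : ∀ u v, u ∈ Rl → v ∈ Rl → u = v := by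
      intro u v hu hv
      have : v ∈ ({u} : Set Q) := (h {u}).2.1 ⟨u, hreach u, hu, rfl⟩ v (hreach v) hv
      exact this.symm
    obtain ⟨r0, hr0reach, hr0⟩ := (h ∅).2.2
    have hr0Rl : r0 ∈ Rl := hr0 r0 Relation.ReflTransGen.refl
    have hfr0 : f r0 = r0 :=
      hRl _ _ (hr0 (f r0) (Relation.ReflTransGen.single (hf r0))) hr0Rl
    have hiter : ∀ u, ∃ k, f^[k] q = u := by
      intro u
      have hu := hreach u
      induction hu with
      | refl => exact ⟨0, rfl⟩
      | tail hab hbc ih =>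
        obtain ⟨k, hk⟩ := ih
        refine ⟨k + 1, ?_⟩
        rw [Function.iterate_succ_apply', hk]
        exact ((hRf _ _).1 hbc).symm
    classical
    have hex := hiter r0
    set n := Nat.find hex with hn
    have hnspec : f^[n] q = r0 := Nat.find_spec hex
    have hhigh : ∀ k, n ≤ k → f^[k] q = r0 := by
      intro k hk
      have : f^[k] q = f^[k - n] (f^[n] q) := by
        rw [← Function.iterate_add_apply]
        congr 1
        omega
      rw [this, hnspec, Function.iterate_fixed hfr0]
    have ginj : ∀ i j : ℕ, i ≤ n → j ≤ n → f^[i] q = f^[j] q → i = j := by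
      intro i j hi hj hij
      by_contra hne
      wlog hlt : i < j generalizing i j
      · exact this j i hj hi hij.symm (Ne.symm hne) (by omega)
      have key : f^[n - j + i] q = r0 := by
        rw [Function.iterate_add_apply, hij, ← Function.iterate_add_apply]
        have : n - j + j = n := by omega
        rw [this, hnspec]
      exact Nat.find_min hex (by omega) key
    have hgbij : Function.Bijective (fun i : Fin (n+1) => f^[i.1] q) := by
      constructor
      · intro i j hij
        exact Fin.ext (ginj i.1 j.1 (by omega) (by omega) hij)
      · intro u
        obtain ⟨k, hk⟩ := hiter u
        rcases le_or_gt k n with hkn | hkn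
        · exact ⟨⟨k, by omega⟩, hk⟩
        · refine ⟨⟨n, by omega⟩, ?_⟩
          simp only
          rw [hnspec, ← hk, hhigh k (by omega)]
    set g := fun i : Fin (n+1) => f^[i.1] q with hg
    refine ⟨n + 1, Nat.succ_pos n, (Equiv.ofBijective g hgbij).symm, ?_, ?_⟩
    · have : g ⟨0, Nat.succ_pos n⟩ = q := rfl
      rw [← this, Equiv.ofBijective_symm_apply_apply]
    · intro a b
      set e := (Equiv.ofBijective g hgbij).symm with he
      have hga : f^[(e a).1] q = a := (Equiv.ofBijective g hgbij).apply_symm_apply a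
      have hgb : f^[(e b).1] q = b := (Equiv.ofBijective g hgbij).apply_symm_apply b
      have hfa : f a = f^[(e a).1 + 1] q := by
        rw [Function.iterate_succ_apply', hga]
      have hm1 : n + 1 - 1 = n := rfl
      rw [hRf, hm1]
      rcases lt_or_eq_of_le (Nat.lt_succ_iff.mp (e a).2) with hlt | heq
      · constructor
        · intro hb
          left
          have : f^[(e b).1] q = f^[(e a).1 + 1] q := by rw [hgb, hb, hfa]
          have := ginj (e b).1 ((e a).1 + 1) (by omega) (by omega) this
          omega
        · rintro (hb | ⟨hb, rfl⟩)
          · calc b = f^[(e b).1] q := hgb.symm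
              _ = f^[(e a).1 + 1] q := by rw [← hb]
              _ = f a := hfa.symm
          · omega
      · have har0 : a = r0 := by
          calc a = f^[(e a).1] q := hga.symm
            _ = f^[n] q := by rw [heq]
            _ = r0 := hnspec
        constructor
        · intro hb
          right
          refine ⟨heq, ?_⟩
          rw [hb, har0, hfr0]
        · rintro (hb | ⟨hb, rfl⟩)
          · have hbn : (e b).1 < n + 1 := (e b).2
            omega
          · rw [har0, hfr0]
  · rintro ⟨m, hm, e, hq, hR⟩
    have hm1 : m - 1 < m := by omega
    set last := e.symm ⟨m - 1, hm1⟩ with hlast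
    have hlastval : (e last).1 = m - 1 := by rw [hlast, Equiv.apply_symm_apply]
    -- determinism
    have hdet : ∀ u x y, R u x → R u y → x = y := by
      intro u x y hx hy
      rcases (hR u x).1 hx with h1 | ⟨h1, h1'⟩ <;>
        rcases (hR u y).1 hy with h2 | ⟨h2, h2'⟩
      · exact e.injective (Fin.ext (by omega))
      · exfalso
        have := (e x).2
        omega
      · exfalso
        have := (e y).2
        omega
      · rw [h1', h2']
    -- the last state only loops to itself
    have hloop : ∀ x, R last x → x = last := by
      intro x hx
      rcases (hR last x).1 hx with h1 | ⟨h1, h1'⟩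
      · exfalso
        have := (e x).2
        omega
      · exact h1'
    refine ⟨{last}, fun G => ⟨?_, ?_, ?_⟩⟩
    · intro u _
      refine ⟨htotal u, ?_⟩
      rintro ⟨x, hx, hxG⟩ y hy
      rwa [hdet u y x hy hx]
    · rintro ⟨u, _, hu, huG⟩ v _ hv
      have hu' : u = last := hu
      have hv' : v = last := hv
      rw [hv', ← hu']
      exact huG
    · refine ⟨last, hreach last, ?_⟩
      intro u' hu'
      have : u' = last := by
        induction hu' with
        | refl => rfl
        | tail hab hbc ih =>
          rw [ih] at hbc
          exact hloop _ hbc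
      exact this
end

section
/- Let S = (Q, R, ℓ) be a finite Kripke structure and define S₂ = (Q ∪ Q_int, R₂, ℓ₂), where each state of S with k ≥ 2 successors q₁,…,q_k has its outgoing transitions replaced by a transition to the root of a complete binary tree of k−1 fresh internal nodes (all labelled with the fresh proposition p_int) whose k leaves are q₁,…,q_k, and states with a single successor keep their transition. Then every node of S₂ has degree at most 2, |Q_int| = Σ_{x ∈ Q, deg(x) ≥ 2} (deg(x) − 1), and for every state q ∈ Q the set of original states visited (in order, skipping p_int-states) along paths of S₂ from q coincides with the set of paths of S from q. -/
/-!
The successors `child x 0, …, child x (k-1)` of a state `x` of degree `k` become the leaves of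
a comb of internal nodes `⟨x, 0⟩, …, ⟨x, k-2⟩`. Every edge `x → y` of `S` is then simulated by
exactly one walk of `S₂` from `x` to `y` through internal nodes (leaves are distinct
successors), and no walk stays among internal nodes forever (the comb index increases). Cutting
a path of `S₂` at its original states therefore splits it into these walks: this makes erasure
injective, and concatenating the walks of the edges of a path of `S` inverts it.
-/

/-- The path `ρ` (in `S`) is obtained from the path `π` (in `S₂`, over `Q ⊕ Qint`,
where `Qint` are the `p_int`-labelled internal nodes) by erasing the internal nodes:
some strictly monotone `σ` enumerates exactly the positions of `π` carrying original
states, in order, and `ρ` lists the corresponding original states. -/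
def Erases {Q Qint : Type} (π : ℕ → Q ⊕ Qint) (ρ : ℕ → Q) : Prop :=
  ∃ σ : ℕ → ℕ, StrictMono σ ∧ (∀ n, π (σ n) = Sum.inl (ρ n)) ∧
    ∀ m x, π m = Sum.inl x → ∃ n, σ n = m

open Sum Finset

theorem StrictMono.exists_le_lt_succ {σ : ℕ → ℕ} (hσ : StrictMono σ) (h0 : σ 0 = 0) (m : ℕ) :
    ∃ n, σ n ≤ m ∧ m < σ (n + 1) := by
  have hex : ∃ n, m < σ (n + 1) := ⟨m, (hσ.id_le (m + 1) : m + 1 ≤ σ (m + 1))⟩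
  refine ⟨Nat.find hex, ?_, Nat.find_spec hex⟩
  cases hn : Nat.find hex with
  | zero => simp [h0]
  | succ n => simpa using Nat.find_min hex (m := n) (by omega)

theorem StrictMono.eq_of_le_lt_succ {σ : ℕ → ℕ} (hσ : StrictMono σ) {m n n' : ℕ}
    (h : σ n ≤ m ∧ m < σ (n + 1)) (h' : σ n' ≤ m ∧ m < σ (n' + 1)) : n = n' := by
  have := hσ.lt_iff_lt.mp (h.1.trans_lt h'.2)
  have := hσ.lt_iff_lt.mp (h'.1.trans_lt h.2)
  omega

section Erasure

variable {α β : Type}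

def IsInternalWalk (R₂ : α ⊕ β → α ⊕ β → Prop) (w : ℕ → α ⊕ β) (L : ℕ) (x y : α) : Prop :=
  w 0 = inl x ∧ w (L + 1) = inl y ∧ (∀ t < L, ∀ a, w (t + 1) ≠ inl a) ∧
    ∀ t ≤ L, R₂ (w t) (w (t + 1))

def ErasesAlong (σ : ℕ → ℕ) (π : ℕ → α ⊕ β) (ρ : ℕ → α) : Prop :=
  StrictMono σ ∧ (∀ n, π (σ n) = inl (ρ n)) ∧ ∀ m x, π m = inl x → ∃ n, σ n = m

variable {R₂ : α ⊕ β → α ⊕ β → Prop}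

theorem Erases.unique {π : ℕ → α ⊕ β} {ρ₁ ρ₂ : ℕ → α} (h₁ : Erases π ρ₁) (h₂ : Erases π ρ₂) :
    ρ₁ = ρ₂ := by
  obtain ⟨σ₁, hσ₁, hv₁, hs₁⟩ := h₁
  obtain ⟨σ₂, hσ₂, hv₂, hs₂⟩ := h₂
  have hσ : σ₁ = σ₂ := (hσ₁.range_inj hσ₂).mp <| by
    ext m
    constructor
    · rintro ⟨n, rfl⟩; exact hs₂ _ _ (hv₁ n)
    · rintro ⟨n, rfl⟩; exact hs₁ _ _ (hv₂ n)
  funext n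
  exact inl_injective ((hv₁ n).symm.trans (hσ ▸ hv₂ n))

theorem exists_erases {π : ℕ → α ⊕ β} (h : ∀ m, ∃ m' > m, ∃ a, π m' = inl a) :
    ∃ ρ, Erases π ρ := by
  have hinf : {m | ∃ a, π m = inl a}.Infinite :=
    Set.infinite_of_forall_exists_gt fun m => (h m).imp fun _ ⟨hm, ha⟩ => ⟨ha, hm⟩
  refine ⟨fun n => (Nat.nth_mem_of_infinite hinf n).choose, Nat.nth _, Nat.nth_strictMono hinf,
    fun n => (Nat.nth_mem_of_infinite hinf n).choose_spec, fun m x hm => ?_⟩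
  rw [← Set.mem_range, Nat.range_nth_of_infinite hinf]
  exact ⟨x, hm⟩

theorem exists_gt_eq_inl (hwf : WellFounded fun b' b => R₂ (inr b) (inr b'))
    {π : ℕ → α ⊕ β} (hπ : ∀ i, R₂ (π i) (π (i + 1))) (m : ℕ) : ∃ m' > m, ∃ a, π m' = inl a := by
  have step : ∀ m, (∀ b, π (m + 1) = inr b → ∃ m' > m + 1, ∃ a, π m' = inl a) →
      ∃ m' > m, ∃ a, π m' = inl a := by
    intro m h
    rcases hm : π (m + 1) with a | b
    · exact ⟨m + 1, by omega, a, hm⟩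
    · obtain ⟨m', hm', ha⟩ := h b hm
      exact ⟨m', by omega, ha⟩
  have internal (b : β) : ∀ m, π m = inr b → ∃ m' > m, ∃ a, π m' = inl a := by
    induction b using hwf.induction with
    | _ b ih =>
      intro m hb
      exact step m fun b' hb' => ih b' (by simpa [hb, hb'] using hπ m) (m + 1) hb'
  exact step m fun b hb => internal b (m + 1) hb

namespace ErasesAlong

variable {σ : ℕ → ℕ} {π : ℕ → α ⊕ β} {ρ : ℕ → α}

theorem eq_zero (h : ErasesAlong σ π ρ) {q : α} (hq : π 0 = inl q) : σ 0 = 0 := by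
  obtain ⟨n, hn⟩ := h.2.2 0 q hq
  have := h.1.monotone (Nat.zero_le n)
  omega

theorem ne_inl (h : ErasesAlong σ π ρ) {n m : ℕ} (h₁ : σ n < m) (h₂ : m < σ (n + 1)) (a : α) :
    π m ≠ inl a := by
  intro ha
  obtain ⟨k, rfl⟩ := h.2.2 m a ha
  have := h.1.lt_iff_lt.mp h₁
  have := h.1.lt_iff_lt.mp h₂
  omega

theorem isInternalWalk (h : ErasesAlong σ π ρ) (hπ : ∀ i, R₂ (π i) (π (i + 1))) (n : ℕ) :
    IsInternalWalk R₂ (fun t => π (σ n + t)) (σ (n + 1) - σ n - 1) (ρ n) (ρ (n + 1)) := by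
  have hlt := h.1 (Nat.lt_add_one n)
  refine ⟨h.2.1 n, ?_, fun t ht a => h.ne_inl (n := n) (by omega) (by omega) a, fun t _ => hπ _⟩
  show π (σ n + (σ (n + 1) - σ n - 1 + 1)) = _
  rw [show σ n + (σ (n + 1) - σ n - 1 + 1) = σ (n + 1) by omega]
  exact h.2.1 (n + 1)

end ErasesAlong

theorem eq_of_erasesAlong
    (hunique : ∀ {x y w w' L L'}, IsInternalWalk R₂ w L x y → IsInternalWalk R₂ w' L' x y →
      L = L' ∧ ∀ t ≤ L + 1, w t = w' t)
    {π₁ π₂ : ℕ → α ⊕ β} {σ₁ σ₂ : ℕ → ℕ} {ρ : ℕ → α} {q : α}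
    (hπ₁ : ∀ i, R₂ (π₁ i) (π₁ (i + 1))) (hπ₂ : ∀ i, R₂ (π₂ i) (π₂ (i + 1)))
    (hq₁ : π₁ 0 = inl q) (hq₂ : π₂ 0 = inl q)
    (h₁ : ErasesAlong σ₁ π₁ ρ) (h₂ : ErasesAlong σ₂ π₂ ρ) : π₁ = π₂ := by
  have hσ : σ₁ = σ₂ := by
    funext n
    induction n with
    | zero => rw [h₁.eq_zero hq₁, h₂.eq_zero hq₂]
    | succ n ih =>
      have := (hunique (h₁.isInternalWalk hπ₁ n) (h₂.isInternalWalk hπ₂ n)).1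
      have := h₁.1 (Nat.lt_add_one n)
      have := h₂.1 (Nat.lt_add_one n)
      omega
  subst hσ
  funext m
  obtain ⟨n, hn, hm⟩ := h₁.1.exists_le_lt_succ (h₁.eq_zero hq₁) m
  have := (hunique (h₁.isInternalWalk hπ₁ n) (h₂.isInternalWalk hπ₂ n)).2 (m - σ₁ n) (by omega)
  simpa [Nat.add_sub_cancel' hn] using this

theorem exists_erasesAlong_of_isInternalWalk {w : ℕ → ℕ → α ⊕ β} {L : ℕ → ℕ} {ρ : ℕ → α}
    (hw : ∀ n, IsInternalWalk R₂ (w n) (L n) (ρ n) (ρ (n + 1))) :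
    ∃ π : ℕ → α ⊕ β, (∀ i, R₂ (π i) (π (i + 1))) ∧
      ErasesAlong (fun n => ∑ k ∈ range n, (L k + 1)) π ρ := by
  set σ : ℕ → ℕ := fun n => ∑ k ∈ range n, (L k + 1)
  have hσ_succ n : σ (n + 1) = σ n + (L n + 1) := sum_range_succ _ _
  have hσ : StrictMono σ := strictMono_nat_of_lt_succ fun n => by rw [hσ_succ]; omega
  choose seg hseg using hσ.exists_le_lt_succ rfl
  have seg_eq {m n} (h₁ : σ n ≤ m) (h₂ : m < σ (n + 1)) : seg m = n :=
    hσ.eq_of_le_lt_succ (hseg m) ⟨h₁, h₂⟩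
  refine ⟨fun m => w (seg m) (m - σ (seg m)), fun m => ?_, hσ, fun n => ?_, fun m x hm => ?_⟩
  · dsimp only
    obtain ⟨h₁, h₂⟩ := hseg m
    have := hσ_succ (seg m)
    have hstep := (hw (seg m)).2.2.2 (m - σ (seg m)) (by omega)
    by_cases hend : m + 1 < σ (seg m + 1)
    · rwa [seg_eq (m := m + 1) (by omega) hend, show m + 1 - σ (seg m) = m - σ (seg m) + 1 by omega]
    · have hm : m + 1 = σ (seg m + 1) := by omega
      have := hσ (Nat.lt_add_one (seg m + 1))
      rw [seg_eq (m := m + 1) (n := seg m + 1) (by omega) (by omega), hm, Nat.sub_self,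
        (hw _).1, ← (hw (seg m)).2.1]
      rwa [show L (seg m) = m - σ (seg m) by omega]
  · simpa [seg_eq le_rfl (hσ (Nat.lt_add_one n))] using (hw n).1
  · obtain ⟨h₁, h₂⟩ := hseg m
    have := hσ_succ (seg m)
    refine ⟨seg m, ?_⟩
    by_contra hne
    exact (hw (seg m)).2.2.1 (m - σ (seg m) - 1) (by omega) x
      (by rwa [show m - σ (seg m) - 1 + 1 = m - σ (seg m) by omega])

theorem exists_equiv_erases {R : α → α → Prop}
    (hwf : WellFounded fun b' b => R₂ (inr b) (inr b'))
    (hR : ∀ x y, R x y ↔ ∃ w L, IsInternalWalk R₂ w L x y)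
    (hunique : ∀ {x y w w' L L'}, IsInternalWalk R₂ w L x y → IsInternalWalk R₂ w' L' x y →
      L = L' ∧ ∀ t ≤ L + 1, w t = w' t)
    (q : α) :
    ∃ e : {π : ℕ → α ⊕ β // π 0 = inl q ∧ ∀ i, R₂ (π i) (π (i + 1))} ≃
        {ρ : ℕ → α // ρ 0 = q ∧ ∀ i, R (ρ i) (ρ (i + 1))},
      ∀ π, Erases π.1 (e π).1 := by
  choose erase herase using fun π : {π : ℕ → α ⊕ β // π 0 = inl q ∧ ∀ i, R₂ (π i) (π (i + 1))} =>
    exists_erases (exists_gt_eq_inl hwf π.2.2)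
  have hpath π : erase π 0 = q ∧ ∀ i, R (erase π i) (erase π (i + 1)) := by
    obtain ⟨σ, hσ⟩ := herase π
    have h0 := hσ.2.1 0
    rw [ErasesAlong.eq_zero hσ π.2.1, π.2.1] at h0
    exact ⟨(inl_injective h0).symm,
      fun i => (hR _ _).mpr ⟨_, _, ErasesAlong.isInternalWalk hσ π.2.2 i⟩⟩
  refine ⟨Equiv.ofBijective (fun π => ⟨erase π, hpath π⟩) ⟨fun π₁ π₂ h => ?_, ?_⟩, herase⟩
  · obtain ⟨σ₁, h₁⟩ := herase π₁
    obtain ⟨σ₂, h₂⟩ := herase π₂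
    rw [show erase π₁ = erase π₂ from congrArg Subtype.val h] at h₁
    exact Subtype.ext (eq_of_erasesAlong hunique π₁.2.2 π₂.2.2 π₁.2.1 π₂.2.1 h₁ h₂)
  · rintro ⟨ρ, hρ0, hρ⟩
    choose w L hw using fun n => (hR _ _).mp (hρ n)
    obtain ⟨π, hπ, hσ⟩ := exists_erasesAlong_of_isInternalWalk hw
    have h0 : π 0 = inl q := by simpa [hρ0] using hσ.2.1 0
    exact ⟨⟨π, h0, hπ⟩, Subtype.ext ((herase _).unique ⟨_, hσ⟩)⟩

end Erasure

namespace BinaryEncoding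

variable {Q : Type} (R : Q → Q → Prop)

noncomputable abbrev deg (x : Q) : ℕ := Set.ncard {y | R x y}

abbrev Internal : Type := Σ x : Q, Fin (deg R x - 1)

theorem card_internal [Fintype Q] : Nat.card (Internal R) = ∑ x : Q, (deg R x - 1) := by
  simp

variable [Finite Q]

noncomputable def childEquiv (x : Q) : {y | R x y} ≃ Fin (deg R x) :=
  Finite.equivFinOfCardEq (Nat.card_coe_set_eq _)

noncomputable def child (x : Q) (j : ℕ) : Q :=
  if h : j < deg R x then ((childEquiv R x).symm ⟨j, h⟩ : {y | R x y}) else x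

/-- The root of the part of the comb of `x` holding the leaves `j, …, deg R x - 1`; for the
last leaf this is the leaf itself. -/
noncomputable def subtree (x : Q) (j : ℕ) : Q ⊕ Internal R :=
  if h : j + 1 < deg R x then inr ⟨x, ⟨j, by omega⟩⟩ else inl (child R x j)

def binarize : Q ⊕ Internal R → Q ⊕ Internal R → Prop
  | inl x, u => u = subtree R x 0
  | inr ⟨x, i⟩, u => u = inl (child R x i) ∨ u = subtree R x (i + 1)

/-- The number of internal nodes on the way from `x` to its leaf `child R x j`. -/
noncomputable def leafDepth (x : Q) (j : ℕ) : ℕ := min (j + 1) (deg R x - 1)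

noncomputable def walkTo (x : Q) (j : ℕ) : ℕ → Q ⊕ Internal R
  | 0 => inl x
  | t + 1 => if t < leafDepth R x j then subtree R x t else inl (child R x j)

variable {R}

theorem rel_child {x : Q} {j : ℕ} (h : j < deg R x) : R x (child R x j) := by
  simp only [child, dif_pos h]
  exact ((childEquiv R x).symm ⟨j, h⟩).2

theorem child_injOn (x : Q) : Set.InjOn (child R x) (Set.Iio (deg R x)) := by
  intro j (h : j < deg R x) j' (h' : j' < deg R x) he
  simp only [child, dif_pos h, dif_pos h'] at he
  simpa using (childEquiv R x).symm.injective (Subtype.ext he)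

theorem exists_child_eq {x y : Q} (h : R x y) : ∃ j < deg R x, child R x j = y :=
  ⟨childEquiv R x ⟨y, h⟩, (childEquiv R x ⟨y, h⟩).2, by simp [child]⟩

theorem subtree_of_not_lt {x : Q} {j : ℕ} (h : ¬j + 1 < deg R x) :
    subtree R x j = inl (child R x j) :=
  dif_neg h

theorem lt_of_subtree_ne_inl {x : Q} {j : ℕ} (h : ∀ a, subtree R x j ≠ inl a) :
    j + 1 < deg R x := by
  by_contra hj
  exact h _ (subtree_of_not_lt hj)

theorem subtree_eq_inl {x y : Q} {j : ℕ} (h : subtree R x j = inl y) :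
    deg R x ≤ j + 1 ∧ child R x j = y := by
  unfold subtree at h
  split_ifs at h with hj
  exact ⟨by omega, inl_injective h⟩

theorem binarize_subtree {x : Q} {j : ℕ} (h : j + 1 < deg R x) {u : Q ⊕ Internal R} :
    binarize R (subtree R x j) u ↔ u = inl (child R x j) ∨ u = subtree R x (j + 1) := by
  rw [subtree, dif_pos h]
  rfl

theorem binarize_total (u : Q ⊕ Internal R) : ∃ v, binarize R u v :=
  match u with
  | inl _ => ⟨_, rfl⟩
  | inr _ => ⟨_, Or.inl rfl⟩

theorem ncard_binarize_le_two (u : Q ⊕ Internal R) : {v | binarize R u v}.ncard ≤ 2 := by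
  rcases u with x | ⟨x, i⟩
  · simp [binarize]
  · exact (Set.ncard_insert_le (inl (child R x i)) {subtree R x (i + 1)}).trans (by simp)

theorem binarize_inl_iff_of_eq_singleton {x y : Q} (h : {z | R x z} = {y})
    (u : Q ⊕ Internal R) : binarize R (inl x) u ↔ u = inl y := by
  have hdeg : deg R x = 1 := by simp [deg, h]
  have hchild : child R x 0 ∈ {z | R x z} := rel_child (by omega)
  rw [h] at hchild
  rw [binarize, subtree_of_not_lt (by omega), Set.mem_singleton_iff.mp hchild]

theorem wellFounded_binarize : WellFounded fun b' b => binarize R (inr b) (inr b') := by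
  refine Subrelation.wf (fun {b' b} h => ?_) (measure fun b : Internal R => deg R b.1 - b.2).wf
  obtain ⟨x, i⟩ := b
  obtain ⟨x', i'⟩ := b'
  rcases h with h | h
  · exact absurd h inr_ne_inl
  · unfold subtree at h
    split_ifs at h with hi
    cases h
    show deg R x - (i + 1) < deg R x - i
    omega

theorem isInternalWalk_walkTo {x : Q} {j : ℕ} (hj : j < deg R x) :
    IsInternalWalk (binarize R) (walkTo R x j) (leafDepth R x j) x (child R x j) := by
  have hD : leafDepth R x j = min (j + 1) (deg R x - 1) := rfl
  refine ⟨rfl, by simp [walkTo], fun t ht a => ?_, fun t ht => ?_⟩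
  · simp only [walkTo, if_pos ht, subtree, dif_pos (show t + 1 < deg R x by omega)]
    exact inr_ne_inl
  · cases t with
    | zero =>
      show walkTo R x j 1 = subtree R x 0
      by_cases h0 : 0 < leafDepth R x j
      · simp [walkTo, h0]
      · rw [walkTo, if_neg h0, subtree_of_not_lt (by omega), show j = 0 by omega]
    | succ t =>
      rw [walkTo, if_pos (show t < leafDepth R x j by omega), binarize_subtree (by omega), walkTo]
      by_cases ht' : t + 1 < leafDepth R x j
      · exact Or.inr (if_pos ht')
      · rw [if_neg ht']
        by_cases hjt : j = t
        · exact Or.inl (by rw [hjt])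
        · exact Or.inr (by rw [subtree_of_not_lt (by omega), show j = t + 1 by omega])

theorem eq_subtree_of_isInternalWalk {w : ℕ → Q ⊕ Internal R} {L : ℕ} {x y : Q}
    (hw : IsInternalWalk (binarize R) w L x y) {t : ℕ} (ht : t < L) :
    w (t + 1) = subtree R x t ∧ t + 1 < deg R x := by
  obtain ⟨h0, -, hint, hstep⟩ := hw
  induction t with
  | zero =>
    have h1 : w 1 = subtree R x 0 := by simpa [h0, binarize] using hstep 0 (Nat.zero_le _)
    exact ⟨h1, lt_of_subtree_ne_inl (h1 ▸ hint 0 ht)⟩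
  | succ t ih =>
    obtain ⟨ht1, hlt⟩ := ih (by omega)
    have := hstep (t + 1) (by omega)
    rw [ht1, binarize_subtree hlt] at this
    rcases this with h | h
    · exact absurd h (hint (t + 1) ht _)
    · exact ⟨h, lt_of_subtree_ne_inl (h ▸ hint (t + 1) ht)⟩

theorem exists_child_eq_of_isInternalWalk (htotal : ∀ u, ∃ u', R u u')
    {w : ℕ → Q ⊕ Internal R} {L : ℕ} {x y : Q} (hw : IsInternalWalk (binarize R) w L x y) :
    ∃ j < deg R x, child R x j = y ∧ L = leafDepth R x j := by
  have hpos : 0 < deg R x := Set.ncard_pos (Set.toFinite _) |>.mpr (htotal x)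
  have hstep := hw.2.2.2 L le_rfl
  rw [hw.2.1] at hstep
  cases L with
  | zero =>
    rw [hw.1] at hstep
    obtain ⟨hdeg, hy⟩ := subtree_eq_inl hstep.symm
    exact ⟨0, hpos, hy, by simp only [leafDepth]; omega⟩
  | succ t =>
    obtain ⟨ht, hlt⟩ := eq_subtree_of_isInternalWalk hw (Nat.lt_add_one t)
    rw [ht, binarize_subtree hlt] at hstep
    rcases hstep with h | h
    · exact ⟨t, by omega, (inl_injective h).symm, by simp only [leafDepth]; omega⟩
    · obtain ⟨hdeg, hy⟩ := subtree_eq_inl h.symm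
      exact ⟨t + 1, hlt, hy, by simp only [leafDepth]; omega⟩

theorem eq_walkTo_of_isInternalWalk {w : ℕ → Q ⊕ Internal R} {L : ℕ} {x y : Q} {j : ℕ}
    (hw : IsInternalWalk (binarize R) w L x y) (hy : child R x j = y)
    (hL : L = leafDepth R x j) : ∀ t ≤ L + 1, w t = walkTo R x j t
  | 0, _ => hw.1
  | t + 1, ht => by
    rcases Nat.lt_or_ge t L with h | h
    · rw [(eq_subtree_of_isInternalWalk hw h).1, walkTo, if_pos (hL ▸ h)]
    · rw [show t = L by omega, hw.2.1, walkTo, if_neg (by omega), hy]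

theorem rel_iff_exists_isInternalWalk (htotal : ∀ u, ∃ u', R u u') (x y : Q) :
    R x y ↔ ∃ w L, IsInternalWalk (binarize R) w L x y := by
  constructor
  · intro h
    obtain ⟨j, hj, rfl⟩ := exists_child_eq h
    exact ⟨_, _, isInternalWalk_walkTo hj⟩
  · rintro ⟨w, L, hw⟩
    obtain ⟨j, hj, rfl, -⟩ := exists_child_eq_of_isInternalWalk htotal hw
    exact rel_child hj

theorem isInternalWalk_unique (htotal : ∀ u, ∃ u', R u u') {x y : Q}
    {w w' : ℕ → Q ⊕ Internal R} {L L' : ℕ} (hw : IsInternalWalk (binarize R) w L x y)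
    (hw' : IsInternalWalk (binarize R) w' L' x y) : L = L' ∧ ∀ t ≤ L + 1, w t = w' t := by
  obtain ⟨j, hj, hy, hL⟩ := exists_child_eq_of_isInternalWalk htotal hw
  obtain ⟨j', hj', hy', hL'⟩ := exists_child_eq_of_isInternalWalk htotal hw'
  obtain rfl := child_injOn x hj hj' (hy.trans hy'.symm)
  refine ⟨hL.trans hL'.symm, fun t ht => ?_⟩
  rw [eq_walkTo_of_isInternalWalk hw hy hL t ht,
    eq_walkTo_of_isInternalWalk hw' hy' hL' t (by omega)]

end BinaryEncoding

theorem binary_encoding_general {Q : Type} [Fintype Q]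
    (R : Q → Q → Prop) (htotal : ∀ u, ∃ u', R u u') :
    ∃ (Qint : Type) (_ : Fintype Qint) (R₂ : Q ⊕ Qint → Q ⊕ Qint → Prop),
      (∀ n, ∃ m, R₂ n m) ∧
      (∀ n : Q ⊕ Qint, Set.ncard {m | R₂ n m} ≤ 2) ∧
      (Nat.card Qint = ∑ x : Q, (Set.ncard {y | R x y} - 1)) ∧
      (∀ x y : Q, ({z | R x z} : Set Q) = {y} →
        (R₂ (Sum.inl x) (Sum.inl y) ∧ ∀ m, R₂ (Sum.inl x) m → m = Sum.inl y)) ∧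
      ∀ q : Q,
        ∃ e : {π : ℕ → Q ⊕ Qint // π 0 = Sum.inl q ∧ ∀ i, R₂ (π i) (π (i + 1))} ≃
              {ρ : ℕ → Q // ρ 0 = q ∧ ∀ i, R (ρ i) (ρ (i + 1))},
          ∀ π, Erases π.1 (e π).1 :=
  ⟨BinaryEncoding.Internal R, inferInstance, BinaryEncoding.binarize R,
    BinaryEncoding.binarize_total, BinaryEncoding.ncard_binarize_le_two,
    BinaryEncoding.card_internal R,
    fun _ _ h => ⟨(BinaryEncoding.binarize_inl_iff_of_eq_singleton h _).mpr rfl,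
      fun _ => (BinaryEncoding.binarize_inl_iff_of_eq_singleton h _).mp⟩,
    exists_equiv_erases BinaryEncoding.wellFounded_binarize
      (BinaryEncoding.rel_iff_exists_isInternalWalk htotal)
      (BinaryEncoding.isInternalWalk_unique htotal)⟩

/-- The binary-encoding construction `S₂` of a finite Kripke structure `S`:
there is a set `Qint` of fresh internal (`p_int`-labelled) nodes and a transition
relation `R₂` on `Q ⊕ Qint` such that every node has at most two successors,
`|Q_int| = Σ_x (deg(x) − 1)`, states with a single successor keep their transition,
and for every state `q`, erasing internal nodes is a bijection between the infinite
paths of `S₂` from `q` and the infinite paths of `S` from `q`. -/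
theorem binary_encoding {Q : Type} [Fintype Q] [DecidableEq Q]
    (R : Q → Q → Prop) (htotal : ∀ u, ∃ u', R u u') :
    ∃ (Qint : Type) (_ : Fintype Qint) (R₂ : Q ⊕ Qint → Q ⊕ Qint → Prop),
      (∀ n, ∃ m, R₂ n m) ∧
      (∀ n : Q ⊕ Qint, Set.ncard {m | R₂ n m} ≤ 2) ∧
      (Nat.card Qint = ∑ x : Q, (Set.ncard {y | R x y} - 1)) ∧
      (∀ x y : Q, ({z | R x z} : Set Q) = {y} →
        (R₂ (Sum.inl x) (Sum.inl y) ∧ ∀ m, R₂ (Sum.inl x) m → m = Sum.inl y)) ∧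
      ∀ q : Q,
        ∃ e : {π : ℕ → Q ⊕ Qint // π 0 = Sum.inl q ∧ ∀ i, R₂ (π i) (π (i + 1))} ≃
              {ρ : ℕ → Q // ρ 0 = q ∧ ∀ i, R (ρ i) (ρ (i + 1))},
          ∀ π, Erases π.1 (e π).1 :=
  binary_encoding_general R htotal
end
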